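/- arXiv:math/0311421 — 4 statements merged into one kernel-verified Lean document; each statement's English description precedes it below -/
import Mathlib

section
/- Let N be large and let H be a finite set of integers, each in (N, N^{1+β}] for some fixed β > 0, such that every n ∈ H satisfies ω(n) ∼ log log n. Let Q_H be the set of prime-power divisors of elements of H and Σ(H) = ∑_{q∈Q_H} 1/q. If ∑_{n∈H} 1/n > (log N)^{−o(1)}, then Σ(H) > (e^{−1} − o(1)) · log log N. -/
open Finset

theorem esymm_step' {f : ℕ → ℝ} {Q : Finset ℕ} (hf : ∀ q ∈ Q, 0 ≤ f q) (t : ℕ) :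
    ((t:ℝ)+1) * ∑ S ∈ Q.powersetCard (t+1), ∏ q ∈ S, f q ≤
      (∑ q ∈ Q, f q) * ∑ S ∈ Q.powersetCard t, ∏ q ∈ S, f q := by
  classical
  set A := (Q.powersetCard (t+1)).sigma (fun T => T) with hA
  set B := Q.sigma (fun _ => Q.powersetCard t) with hB
  set φ : (Σ _ : Finset ℕ, ℕ) → (Σ _ : ℕ, Finset ℕ) := fun x => ⟨x.2, x.1.erase x.2⟩ with hφ
  have hL : ((t:ℝ)+1) * ∑ S ∈ Q.powersetCard (t+1), ∏ q ∈ S, f q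
      = ∑ x ∈ A, f x.2 * ∏ q ∈ x.1.erase x.2, f q := by
    rw [Finset.mul_sum, Finset.sum_sigma]
    refine Finset.sum_congr rfl fun S hS => ?_
    rw [Finset.mem_powersetCard] at hS
    calc ((t:ℝ)+1) * ∏ q ∈ S, f q = ∑ q ∈ S, ∏ r ∈ S, f r := by
          rw [Finset.sum_const, hS.2]; push_cast [Nat.cast_succ]; ring
      _ = ∑ q ∈ S, f q * ∏ r ∈ S.erase q, f r := by
          refine Finset.sum_congr rfl fun q hq => ?_
          rw [Finset.mul_prod_erase _ _ hq]
  rw [hL]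
  have hinj : ∀ x ∈ A, ∀ y ∈ A, φ x = φ y → x = y := by
    rintro ⟨T, q⟩ h1 ⟨T', q'⟩ h2 h
    simp only [hA, Finset.mem_sigma, Finset.mem_powersetCard] at h1 h2
    obtain ⟨h1', h2'⟩ := Sigma.mk.inj_iff.mp h
    dsimp only at h1'
    subst h1'
    have he : T.erase q = T'.erase q := eq_of_heq h2'
    have hT : T = insert q (T.erase q) := (Finset.insert_erase h1.2).symm
    have hT' : T' = insert q (T'.erase q) := (Finset.insert_erase h2.2).symm
    have : T = T' := by rw [hT, hT', he]
    subst this; rfl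
  have himg : ∀ x ∈ A, f x.2 * ∏ q ∈ x.1.erase x.2, f q
      = (fun y : Σ _ : ℕ, Finset ℕ => f y.1 * ∏ q ∈ y.2, f q) (φ x) := fun x _ => rfl
  rw [Finset.sum_congr rfl himg,
    ← Finset.sum_image (f := fun y : Σ _ : ℕ, Finset ℕ => f y.1 * ∏ q ∈ y.2, f q) hinj]
  have hsub : A.image φ ⊆ B := by
    intro y hy
    simp only [Finset.mem_image, hA, Finset.mem_sigma, Finset.mem_powersetCard] at hy
    obtain ⟨⟨T, q⟩, ⟨hT, hq⟩, rfl⟩ := hy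
    simp only [hB, hφ, Finset.mem_sigma, Finset.mem_powersetCard]
    refine ⟨hT.1 hq, (Finset.erase_subset _ _).trans hT.1, ?_⟩
    rw [Finset.card_erase_of_mem hq, hT.2]
    omega
  calc ∑ y ∈ A.image φ, f y.1 * ∏ q ∈ y.2, f q
      ≤ ∑ y ∈ B, f y.1 * ∏ q ∈ y.2, f q := by
        refine Finset.sum_le_sum_of_subset_of_nonneg hsub fun y hy _ => ?_
        rw [hB, Finset.mem_sigma, Finset.mem_powersetCard] at hy
        exact mul_nonneg (hf _ hy.1) (Finset.prod_nonneg fun q hq => hf _ (hy.2.1 hq))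
    _ = (∑ q ∈ Q, f q) * ∑ S ∈ Q.powersetCard t, ∏ q ∈ S, f q := by
        rw [hB, Finset.sum_sigma, Finset.sum_mul]
        exact Finset.sum_congr rfl fun q _ => by rw [Finset.mul_sum]

theorem esymm_le' {f : ℕ → ℝ} {Q : Finset ℕ} (hf : ∀ q ∈ Q, 0 ≤ f q) (t : ℕ) :
    (t.factorial : ℝ) * ∑ S ∈ Q.powersetCard t, ∏ q ∈ S, f q ≤ (∑ q ∈ Q, f q) ^ t := by
  classical
  induction t with
  | zero => simp
  | succ t ih =>
    have hE : 0 ≤ ∑ S ∈ Q.powersetCard (t+1), ∏ q ∈ S, f q :=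
      Finset.sum_nonneg fun S hS => Finset.prod_nonneg fun q hq =>
        hf _ ((Finset.mem_powersetCard.mp hS).1 hq)
    have hS0 : 0 ≤ ∑ q ∈ Q, f q := Finset.sum_nonneg hf
    have key := esymm_step' hf t
    calc ((t+1).factorial : ℝ) * ∑ S ∈ Q.powersetCard (t+1), ∏ q ∈ S, f q
        = (t.factorial : ℝ) * (((t:ℝ)+1) * ∑ S ∈ Q.powersetCard (t+1), ∏ q ∈ S, f q) := by
          rw [Nat.factorial_succ]; push_cast; ring
      _ ≤ (t.factorial : ℝ) * ((∑ q ∈ Q, f q) * ∑ S ∈ Q.powersetCard t, ∏ q ∈ S, f q) := by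
          exact mul_le_mul_of_nonneg_left key (by positivity)
      _ = (∑ q ∈ Q, f q) * ((t.factorial : ℝ) * ∑ S ∈ Q.powersetCard t, ∏ q ∈ S, f q) := by ring
      _ ≤ (∑ q ∈ Q, f q) * (∑ q ∈ Q, f q) ^ t := mul_le_mul_of_nonneg_left ih hS0
      _ = (∑ q ∈ Q, f q) ^ (t+1) := by ring

noncomputable def expDiv (n : ℕ) : Finset ℕ :=
  n.primeFactors.image (fun p => p ^ n.factorization p)

theorem expDiv_injOn (n : ℕ) : ∀ p ∈ n.primeFactors, ∀ p' ∈ n.primeFactors,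
    p ^ n.factorization p = p' ^ n.factorization p' → p = p' := by
  intro p hp p' hp' h
  have hpp : p.Prime := Nat.prime_of_mem_primeFactors hp
  have hpp' : p'.Prime := Nat.prime_of_mem_primeFactors hp'
  have hk : n.factorization p ≠ 0 := by
    rw [← Nat.support_factorization] at hp; exact Finsupp.mem_support_iff.mp hp
  have hdvd : p ∣ p' ^ n.factorization p' := h ▸ dvd_pow_self p hk
  exact (Nat.prime_dvd_prime_iff_eq hpp hpp').mp (hpp.dvd_of_dvd_pow hdvd)

theorem expDiv_card (n : ℕ) : (expDiv n).card = n.primeFactors.card :=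
  Finset.card_image_of_injOn (expDiv_injOn n)

theorem expDiv_prod (n : ℕ) (hn : n ≠ 0) : ∏ q ∈ expDiv n, q = n := by
  rw [expDiv, Finset.prod_image (expDiv_injOn n), ← Nat.support_factorization]
  exact Nat.factorization_prod_pow_eq_self hn

theorem expDiv_mem {n q : ℕ} (hn : n ≠ 0) (hq : q ∈ expDiv n) :
    q ∈ n.divisors.filter IsPrimePow := by
  rw [expDiv, Finset.mem_image] at hq
  obtain ⟨p, hp, rfl⟩ := hq
  have hpp : p.Prime := Nat.prime_of_mem_primeFactors hp
  have hk : n.factorization p ≠ 0 := by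
    rw [← Nat.support_factorization] at hp; exact Finsupp.mem_support_iff.mp hp
  rw [Finset.mem_filter, Nat.mem_divisors]
  exact ⟨⟨Nat.ordProj_dvd n p, hn⟩, hpp.prime.isPrimePow.pow hk⟩

theorem expDiv_prod_inv (n : ℕ) (hn : n ≠ 0) :
    ∏ q ∈ expDiv n, (1:ℝ)/q = 1/n := by
  have h1 : ((∏ q ∈ expDiv n, q : ℕ) : ℝ) = (n : ℝ) := by rw [expDiv_prod n hn]
  rw [← h1]
  push_cast
  simp only [one_div, ← Finset.prod_inv_distrib]

theorem fiber_le' {H : Finset ℕ} (hH : ∀ n ∈ H, n ≠ 0) (t : ℕ) :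
    ∑ n ∈ H.filter (fun n => n.primeFactors.card = t), (1:ℝ)/n ≤
      ∑ S ∈ (H.biUnion fun n => n.divisors.filter IsPrimePow).powersetCard t,
        ∏ q ∈ S, (1:ℝ)/q := by
  classical
  set Q := H.biUnion fun n => n.divisors.filter IsPrimePow with hQ
  set Ht := H.filter (fun n => n.primeFactors.card = t) with hHt
  have hne : ∀ n ∈ Ht, n ≠ 0 := fun n hn => hH n (Finset.mem_filter.mp hn).1
  have hinj : ∀ n ∈ Ht, ∀ m ∈ Ht, expDiv n = expDiv m → n = m := by
    intro n hn m hm h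
    have h2 : ∏ q ∈ expDiv n, q = ∏ q ∈ expDiv m, q := by rw [h]
    rwa [expDiv_prod _ (hne n hn), expDiv_prod _ (hne m hm)] at h2
  have h1 : ∑ n ∈ Ht, (1:ℝ)/n = ∑ S ∈ Ht.image expDiv, ∏ q ∈ S, (1:ℝ)/q := by
    rw [Finset.sum_image hinj]
    exact Finset.sum_congr rfl fun n hn => (expDiv_prod_inv n (hne n hn)).symm
  rw [h1]
  refine Finset.sum_le_sum_of_subset_of_nonneg ?_ fun S _ _ =>
    Finset.prod_nonneg fun q _ => by positivity
  intro S hS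
  rw [Finset.mem_image] at hS
  obtain ⟨n, hn, rfl⟩ := hS
  rw [Finset.mem_powersetCard]
  obtain ⟨hnH, hnt⟩ := Finset.mem_filter.mp hn
  constructor
  · intro q hq
    rw [hQ, Finset.mem_biUnion]
    exact ⟨n, hnH, expDiv_mem (hne n hn) hq⟩
  · rw [expDiv_card, hnt]

theorem pow_pow_le_factorial_mul_exp' (t : ℕ) :
    (t:ℝ)^t ≤ (t.factorial : ℝ) * Real.exp t := by
  have h := Real.sum_le_exp_of_nonneg (x := (t:ℝ)) (Nat.cast_nonneg t) (t+1)
  have hterm : (t:ℝ)^t / t.factorial ≤ ∑ i ∈ Finset.range (t+1), (t:ℝ)^i / i.factorial :=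
    Finset.single_le_sum (f := fun i => (t:ℝ)^i / i.factorial)
      (fun i _ => by positivity) (Finset.self_mem_range_succ t)
  have h2 : (t:ℝ)^t / t.factorial ≤ Real.exp t := hterm.trans h
  have hf : (0:ℝ) < t.factorial := by positivity
  calc (t:ℝ)^t = ((t:ℝ)^t / t.factorial) * t.factorial := by field_simp
    _ ≤ Real.exp t * t.factorial := mul_le_mul_of_nonneg_right h2 hf.le
    _ = (t.factorial:ℝ) * Real.exp t := by ring

theorem pow_div_factorial_le' {S : ℝ} (hS : 0 ≤ S) {t : ℕ} (ht : 0 < t) :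
    S^t / t.factorial ≤ (S * Real.exp 1 / t)^t := by
  have hf : (0:ℝ) < t.factorial := by positivity
  have htR : (0:ℝ) < t := by exact_mod_cast ht
  have key : (t:ℝ)^t ≤ (t.factorial : ℝ) * Real.exp t := pow_pow_le_factorial_mul_exp' t
  rw [div_pow, mul_pow, div_le_div_iff₀ hf (by positivity)]
  have hexp : Real.exp 1 ^ t = Real.exp t := by
    rw [← Real.exp_nat_mul]; norm_num
  rw [hexp]
  calc S^t * (t:ℝ)^t ≤ S^t * ((t.factorial:ℝ) * Real.exp t) :=
        mul_le_mul_of_nonneg_left key (by positivity)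
    _ = S^t * Real.exp t * t.factorial := by ring

theorem aux_key' {x d : ℝ} (hx : 0 < x) (hd0 : 0 < d) (hd4 : d ≤ x/4) :
    1 - x ≤ (1 - x/2) * (1 - d) := by nlinarith

theorem aux_a' {l d : ℝ} (hl : 0 < l) (hd0 : 0 < d) (hd4 : d ≤ l/4) (hd2 : d ≤ 1/2) :
    l/4 ≤ (1 - d) * l - d := by nlinarith

/-- If `H` is a finite set of integers in `(N, N^{1+β}]` with `ω(n) ∼ log log N` for
all `n ∈ H` and `∑_{n∈H} 1/n > (log N)^{-o(1)}`, then
`Σ(H) = ∑_{q ∈ Q_H} 1/q > (e⁻¹ - o(1)) log log N`, where `Q_H` is the set of prime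
powers dividing elements of `H`. -/
theorem stmt_7 (β : ℝ) (hβ : 0 < β) :
    ∀ ε > (0 : ℝ), ∃ δ > (0 : ℝ), ∃ N₀ : ℕ, ∀ N : ℕ, N₀ ≤ N →
      ∀ H : Finset ℕ,
        (∀ n ∈ H, (N : ℝ) < n ∧ (n : ℝ) ≤ (N : ℝ) ^ (1 + β)) →
        (∀ n ∈ H, |(n.primeFactors.card : ℝ) - Real.log (Real.log N)| ≤
            δ * Real.log (Real.log N)) →
        (∑ n ∈ H, (1 : ℝ) / n) > (Real.log N) ^ (-δ : ℝ) →
        (∑ q ∈ H.biUnion (fun n => n.divisors.filter IsPrimePow), (1 : ℝ) / q) >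
          ((Real.exp 1)⁻¹ - ε) * Real.log (Real.log N) := by
  classical
  intro ε hε
  have he1 : (0:ℝ) < Real.exp 1 := Real.exp_pos 1
  set ε' := min ε ((Real.exp 1)⁻¹ / 2) with hε'def
  have hε'pos : 0 < ε' := lt_min hε (by positivity)
  have hε'le : ε' ≤ ε := min_le_left _ _
  have heε' : Real.exp 1 * ε' ≤ 1/2 := by
    have h1 : ε' ≤ (Real.exp 1)⁻¹/2 := min_le_right _ _
    have h2 : Real.exp 1 * ε' ≤ Real.exp 1 * ((Real.exp 1)⁻¹/2) :=
      mul_le_mul_of_nonneg_left h1 he1.le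
    rw [← mul_div_assoc, mul_inv_cancel₀ he1.ne'] at h2
    linarith
  have heε'pos : 0 < Real.exp 1 * ε' := by positivity
  set r := 1 - Real.exp 1 * ε' / 2 with hrdef
  have hr0 : (0:ℝ) < r := by rw [hrdef]; linarith
  have hr1 : r < 1 := by rw [hrdef]; linarith
  set lr := -Real.log r with hlrdef
  have hlrpos : 0 < lr := by
    rw [hlrdef]; have := Real.log_neg hr0 hr1; linarith
  set δ := min (Real.exp 1 * ε' / 4) (min (lr/4) (1/2)) with hδdef
  have hδpos : 0 < δ := lt_min (by positivity) (lt_min (by positivity) one_half_pos)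
  have hδ1 : δ ≤ Real.exp 1 * ε'/4 := min_le_left _ _
  have hδ2 : δ ≤ lr/4 := (min_le_right _ _).trans (min_le_left _ _)
  have hδ3 : δ ≤ 1/2 := (min_le_right _ _).trans (min_le_right _ _)
  set a := (1-δ)*lr - δ with hadef
  have haf : lr/4 ≤ a := by rw [hadef]; exact aux_a' hlrpos hδpos hδ2 hδ3
  have hapos : 0 < a := lt_of_lt_of_le (by positivity) haf
  clear_value ε' r lr δ a
  set L₀ := max 1 (max (8*δ/a^2) (1/a)) with hL₀def
  refine ⟨δ, hδpos, ⌈Real.exp (Real.exp L₀)⌉₊ + 1, ?_⟩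
  intro N hN H hrange hω hsum
  have hNR : Real.exp (Real.exp L₀) ≤ (N:ℝ) := by
    calc Real.exp (Real.exp L₀) ≤ (⌈Real.exp (Real.exp L₀)⌉₊ : ℝ) := Nat.le_ceil _
      _ ≤ (N:ℝ) := by exact_mod_cast le_trans (Nat.le_succ _) hN
  have hNpos : (0:ℝ) < N := lt_of_lt_of_le (Real.exp_pos _) hNR
  have hlogN : Real.exp L₀ ≤ Real.log N := by
    calc Real.exp L₀ = Real.log (Real.exp (Real.exp L₀)) := (Real.log_exp _).symm
      _ ≤ Real.log N := Real.log_le_log (Real.exp_pos _) hNR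
  have hlogNpos : 0 < Real.log N := lt_of_lt_of_le (Real.exp_pos _) hlogN
  set L := Real.log (Real.log N) with hLdef
  have hLL₀ : L₀ ≤ L := by
    calc L₀ = Real.log (Real.exp L₀) := (Real.log_exp _).symm
      _ ≤ L := Real.log_le_log (Real.exp_pos _) hlogN
  have hL1 : (1:ℝ) ≤ L := le_trans (le_max_left _ _) hLL₀
  have hLpos : (0:ℝ) < L := lt_of_lt_of_le one_pos hL1
  have hLa : 1/a ≤ L := le_trans ((le_max_right _ _).trans (le_max_right _ _)) hLL₀
  have hL8 : 8*δ/a^2 ≤ L := le_trans ((le_max_left _ _).trans (le_max_right _ _)) hLL₀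
  set Q := H.biUnion (fun n => n.divisors.filter IsPrimePow) with hQdef
  set Sg := ∑ q ∈ Q, (1:ℝ)/q with hSgdef
  have hQ0 : ∀ q ∈ Q, (0:ℝ) ≤ 1/(q:ℝ) := fun q _ => by positivity
  have hSg0 : 0 ≤ Sg := Finset.sum_nonneg hQ0
  clear_value Sg
  suffices hs : ((Real.exp 1)⁻¹ - ε') * L < Sg by
    refine lt_of_le_of_lt (mul_le_mul_of_nonneg_right
      (by linarith : (Real.exp 1)⁻¹ - ε ≤ (Real.exp 1)⁻¹ - ε') hLpos.le) hs
  by_contra hcon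
  push_neg at hcon
  have hH0 : ∀ n ∈ H, n ≠ 0 := by
    intro n hn
    have h := (hrange n hn).1
    have : (0:ℝ) < n := lt_trans hNpos h
    exact_mod_cast this.ne'
  have htb : ∀ n ∈ H, (1-δ)*L ≤ (n.primeFactors.card:ℝ) ∧
      (n.primeFactors.card:ℝ) ≤ (1+δ)*L := by
    intro n hn
    have h := abs_le.mp (hω n hn)
    constructor <;> linarith [h.1, h.2]
  set T := H.image (fun n => n.primeFactors.card) with hTdef
  clear_value T
  have hdecomp : ∑ n ∈ H, (1:ℝ)/n
      = ∑ t ∈ T, ∑ n ∈ H.filter (fun n => n.primeFactors.card = t), (1:ℝ)/n := by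
    rw [hTdef]
    exact (Finset.sum_fiberwise_of_maps_to (fun n hn => Finset.mem_image_of_mem _ hn) _).symm
  -- per-fiber bound
  have hper0 : ∀ t : ℕ, (1-δ)*L ≤ (t:ℝ) →
      ∑ n ∈ H.filter (fun n => n.primeFactors.card = t), (1:ℝ)/n
        ≤ r ^ ((1-δ)*L) := by
    intro t htl
    have htpos : 0 < t := by
      rcases Nat.eq_zero_or_pos t with h0 | h1
      · exfalso
        rw [h0, Nat.cast_zero] at htl
        have hpos : 0 < (1-δ)*L := mul_pos (by linarith) hLpos
        linarith
      · exact h1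
    have htR : (0:ℝ) < t := by exact_mod_cast htpos
    have h1 : ∑ n ∈ H.filter (fun n => n.primeFactors.card = t), (1:ℝ)/n
        ≤ ∑ S ∈ Q.powersetCard t, ∏ q ∈ S, (1:ℝ)/q := by
      rw [hQdef]; exact fiber_le' hH0 t
    have h2 : (t.factorial : ℝ) * ∑ S ∈ Q.powersetCard t, ∏ q ∈ S, (1:ℝ)/q
        ≤ Sg ^ t := by rw [hSgdef]; exact esymm_le' hQ0 t
    have hf : (0:ℝ) < t.factorial := by positivity
    have h3 : ∑ S ∈ Q.powersetCard t, ∏ q ∈ S, (1:ℝ)/q ≤ Sg ^ t / t.factorial := by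
      rw [le_div_iff₀ hf]; linarith [h2]
    have h4 : Sg ^ t / t.factorial ≤ (Sg * Real.exp 1 / t)^t :=
      pow_div_factorial_le' hSg0 htpos
    have hratio : Sg * Real.exp 1 / t ≤ r := by
      rw [div_le_iff₀ htR]
      have hSge : Sg * Real.exp 1 ≤ (1 - Real.exp 1 * ε') * L := by
        have h5 : Sg * Real.exp 1 ≤ ((Real.exp 1)⁻¹ - ε') * L * Real.exp 1 :=
          mul_le_mul_of_nonneg_right hcon he1.le
        have h6 : ((Real.exp 1)⁻¹ - ε') * L * Real.exp 1 = (1 - Real.exp 1 * ε') * L := by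
          have hne : Real.exp 1 ≠ 0 := he1.ne'
          field_simp
        linarith
      have hrt : (1 - Real.exp 1 * ε') * L ≤ r * ((1-δ)*L) := by
        have hkey : 1 - Real.exp 1 * ε' ≤ r * (1-δ) := by
          rw [hrdef]; exact aux_key' heε'pos hδpos hδ1
        have := mul_le_mul_of_nonneg_right hkey hLpos.le
        calc (1 - Real.exp 1 * ε') * L ≤ r * (1-δ) * L := this
          _ = r * ((1-δ)*L) := by ring
      have hmono : r * ((1-δ)*L) ≤ r * t := mul_le_mul_of_nonneg_left htl hr0.le
      linarith
    have h5 : (Sg * Real.exp 1 / t)^t ≤ r^t :=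
      pow_le_pow_left₀ (div_nonneg (mul_nonneg hSg0 he1.le) htR.le) hratio t
    have h6 : (r:ℝ)^t = r ^ ((t:ℕ):ℝ) := (Real.rpow_natCast r t).symm
    have h7 : r ^ ((t:ℕ):ℝ) ≤ r ^ ((1-δ)*L) :=
      Real.rpow_le_rpow_of_exponent_ge hr0 hr1.le htl
    calc ∑ n ∈ H.filter (fun n => n.primeFactors.card = t), (1:ℝ)/n
        ≤ Sg ^ t / t.factorial := h1.trans h3
      _ ≤ (Sg * Real.exp 1 / t)^t := h4
      _ ≤ r^t := h5
      _ = r ^ ((t:ℕ):ℝ) := h6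
      _ ≤ r ^ ((1-δ)*L) := h7
  have hper : ∀ t ∈ T,
      ∑ n ∈ H.filter (fun n => n.primeFactors.card = t), (1:ℝ)/n
        ≤ r ^ ((1-δ)*L) := by
    intro t ht
    rw [hTdef, Finset.mem_image] at ht
    obtain ⟨n, hn, rfl⟩ := ht
    exact hper0 _ (htb n hn).1
  have hrp0 : (0:ℝ) ≤ r ^ ((1-δ)*L) := (Real.rpow_pos_of_pos hr0 _).le
  -- sum over T
  have hsum2 : ∑ n ∈ H, (1:ℝ)/n ≤ (T.card : ℝ) * r ^ ((1-δ)*L) := by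
    rw [hdecomp]
    calc ∑ t ∈ T, ∑ n ∈ H.filter (fun n => n.primeFactors.card = t), (1:ℝ)/n
        ≤ ∑ _t ∈ T, r ^ ((1-δ)*L) := Finset.sum_le_sum hper
      _ = (T.card : ℝ) * r ^ ((1-δ)*L) := by rw [Finset.sum_const, nsmul_eq_mul]
  -- card bound
  have hcardT : (T.card : ℝ) ≤ 2*δ*L + 2 := by
    have hsubT : T ⊆ Finset.Icc ⌈(1-δ)*L⌉₊ ⌊(1+δ)*L⌋₊ := by
      intro t ht
      rw [hTdef, Finset.mem_image] at ht
      obtain ⟨n, hn, rfl⟩ := ht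
      obtain ⟨htl, htu⟩ := htb n hn
      rw [Finset.mem_Icc]
      exact ⟨Nat.ceil_le.mpr htl, Nat.le_floor htu⟩
    have hc1 : T.card ≤ ⌊(1+δ)*L⌋₊ + 1 - ⌈(1-δ)*L⌉₊ := by
      calc T.card ≤ (Finset.Icc ⌈(1-δ)*L⌉₊ ⌊(1+δ)*L⌋₊).card := Finset.card_le_card hsubT
        _ = ⌊(1+δ)*L⌋₊ + 1 - ⌈(1-δ)*L⌉₊ := Nat.card_Icc _ _
    rcases le_or_gt (⌈(1-δ)*L⌉₊) (⌊(1+δ)*L⌋₊ + 1) with hab | hab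
    · have hcast : ((⌊(1+δ)*L⌋₊ + 1 - ⌈(1-δ)*L⌉₊ : ℕ) : ℝ)
          = (⌊(1+δ)*L⌋₊ : ℝ) + 1 - (⌈(1-δ)*L⌉₊ : ℝ) := by
        push_cast [Nat.cast_sub hab]; ring
      have hfl : (⌊(1+δ)*L⌋₊ : ℝ) ≤ (1+δ)*L :=
        Nat.floor_le (mul_nonneg (by linarith) hLpos.le)
      have hce : (1-δ)*L ≤ (⌈(1-δ)*L⌉₊ : ℝ) := Nat.le_ceil _
      calc (T.card : ℝ) ≤ ((⌊(1+δ)*L⌋₊ + 1 - ⌈(1-δ)*L⌉₊ : ℕ) : ℝ) := by exact_mod_cast hc1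
        _ = (⌊(1+δ)*L⌋₊ : ℝ) + 1 - (⌈(1-δ)*L⌉₊ : ℝ) := hcast
        _ ≤ (1+δ)*L + 1 - (1-δ)*L := by linarith
        _ ≤ 2*δ*L + 2 := by ring_nf; linarith
    · have : ⌊(1+δ)*L⌋₊ + 1 - ⌈(1-δ)*L⌉₊ = 0 := Nat.sub_eq_zero_of_le hab.le
      have hc2 : T.card = 0 := by omega
      rw [hc2]
      have h9 : 0 ≤ 2*δ*L :=
        mul_nonneg (mul_nonneg (by norm_num) hδpos.le) hLpos.le
      push_cast
      linarith
  -- final analytic inequality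
  have h2exp : 2*δ*L + 2 ≤ Real.exp (a*L) := by
    have haL1 : (1:ℝ) ≤ a*L := by
      have h9 : a * (1/a) ≤ a * L := mul_le_mul_of_nonneg_left hLa hapos.le
      rw [mul_one_div, div_self hapos.ne'] at h9
      linarith
    have haL8 : 8*δ*L ≤ a^2*L*L := by
      have h1 : 8*δ ≤ a^2 * L := by
        rw [div_le_iff₀ (pow_pos hapos 2)] at hL8
        linarith
      have h9 := mul_le_mul_of_nonneg_right h1 hLpos.le
      linarith [h9]
    have hhalf : 1 + a*L/2 ≤ Real.exp (a*L/2) := by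
      have := Real.add_one_le_exp (a*L/2)
      linarith
    have hsq : (1 + a*L/2)^2 ≤ Real.exp (a*L) := by
      have h1 : Real.exp (a*L) = Real.exp (a*L/2) * Real.exp (a*L/2) := by
        rw [← Real.exp_add]; ring_nf
      have h2 : (0:ℝ) ≤ 1 + a*L/2 := by linarith
      rw [h1, sq]
      exact mul_le_mul hhalf hhalf h2 (Real.exp_pos _).le
    have hexpand : 2*δ*L + 2 ≤ (1 + a*L/2)^2 := by
      have h9 : (1 + a*L/2)^2 = 1 + a*L + (a^2*L*L)/4 := by ring
      rw [h9]
      linarith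
    linarith
  have hfin : (2*δ*L+2) * r ^ ((1-δ)*L) ≤ Real.log N ^ (-δ:ℝ) := by
    have hrw1 : r ^ ((1-δ)*L) = Real.exp (-(lr * ((1-δ)*L))) := by
      rw [Real.rpow_def_of_pos hr0]
      congr 1
      rw [hlrdef]; ring
    have hrw2 : Real.log N ^ (-δ:ℝ) = Real.exp (-(δ*L)) := by
      rw [Real.rpow_def_of_pos hlogNpos]
      congr 1
      rw [hLdef]; ring
    rw [hrw1, hrw2]
    have hkey : (2*δ*L+2) * Real.exp (-(lr * ((1-δ)*L)))
        ≤ Real.exp (a*L) * Real.exp (-(lr * ((1-δ)*L))) :=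
      mul_le_mul_of_nonneg_right h2exp (Real.exp_pos _).le
    have heq : Real.exp (a*L) * Real.exp (-(lr * ((1-δ)*L))) = Real.exp (-(δ*L)) := by
      rw [← Real.exp_add]
      congr 1
      rw [hadef]; ring
    linarith [hkey, heq ▸ hkey]
  have hchain : ∑ n ∈ H, (1:ℝ)/n ≤ Real.log N ^ (-δ:ℝ) := by
    calc ∑ n ∈ H, (1:ℝ)/n ≤ (T.card : ℝ) * r ^ ((1-δ)*L) := hsum2
      _ ≤ (2*δ*L+2) * r ^ ((1-δ)*L) := mul_le_mul_of_nonneg_right hcardT hrp0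
      _ ≤ Real.log N ^ (-δ:ℝ) := hfin
  exact absurd hsum (not_lt.mpr hchain)
end

section
/- Let S be a finite set of positive integers all of whose prime-power divisors are less than N, and suppose ∑_{n∈S} 1/n ≥ ρ > μ > 0. If N is sufficiently large in terms of ρ and μ, then there is a subset T ⊆ S with ∑_{n∈T} 1/n > μ such that for every prime power q dividing some element of T, ∑_{n∈T, q|n} 1/n > (ρ − μ)/(2q log log N). -/
/-!
Greedy pruning: while some prime power `q` carries reciprocal mass at most
`θ q = (ρ - μ) / (2 q log log N)` in the current set, discard all multiples of `q`. Each prime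
power is discarded at most once, so the total loss is at most `∑_{q ≤ N} θ q`, which is `< ρ - μ`
because `∑_{q ≤ N} 1/q ≤ log log N + O(1)`. That bound follows from
`∑_{p ≤ n} log p / p ≤ log n + log 4` (Legendre's formula for `n!` and Chebyshev's
`θ(n) ≤ n log 4`) by Abel summation against `1 / log`, the proper prime powers contributing at
most `∑_p 1/(p(p-1)) ≤ 1`.
-/

open Finset Real Filter
open scoped Nat

lemma Nat.div_le_factorization_factorial {p : ℕ} (hp : p.Prime) (n : ℕ) :
    n / p ≤ (n !).factorization p := by
  rcases Nat.eq_zero_or_pos n with rfl | hn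
  · simp
  rw [Nat.factorization_factorial hp ((Nat.log_lt_self p hn.ne').trans n.lt_succ_self)]
  simpa using single_le_sum (f := fun i => n / p ^ i) (fun _ _ => Nat.zero_le _)
    (mem_Ico.2 ⟨le_rfl, by omega⟩ : 1 ∈ Ico 1 (n + 1))

lemma sum_primesLE_div_mul_log_le_log_factorial (n : ℕ) :
    ∑ p ∈ n.primesLE, ((n / p : ℕ) : ℝ) * log p ≤ log (n ! : ℕ) := by
  rw [log_nat_eq_sum_factorization, Finsupp.sum, Nat.support_factorization]
  have hsub : n.primesLE ⊆ (n !).primeFactors := fun p hp => by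
    have hp' := Nat.mem_primesLE.1 hp
    exact Nat.mem_primeFactors.2 ⟨hp'.2, hp'.2.dvd_factorial.2 hp'.1, n.factorial_ne_zero⟩
  refine (sum_le_sum fun p hp => ?_).trans
    (sum_le_sum_of_subset_of_nonneg hsub fun p hp _ => ?_)
  · have hp' := (Nat.mem_primesLE.1 hp).2
    have hlog : 0 ≤ log p := log_nonneg (by exact_mod_cast hp'.one_le)
    gcongr
    exact Nat.div_le_factorization_factorial hp' n
  · exact mul_nonneg (Nat.cast_nonneg _)
      (log_nonneg (by exact_mod_cast (Nat.prime_of_mem_primeFactors hp).one_le))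

lemma sum_primesLE_log_div_le (n : ℕ) :
    ∑ p ∈ n.primesLE, log p / p ≤ log n + log 4 := by
  rcases Nat.eq_zero_or_pos n with rfl | hn
  · simpa [Nat.primesLE] using log_nonneg (by norm_num : (1 : ℝ) ≤ 4)
  have hn' : (0 : ℝ) < n := by exact_mod_cast hn
  have hdiv (p : ℕ) : (n : ℝ) / p ≤ (n / p : ℕ) + 1 := by
    rw [← Nat.floor_div_eq_div (K := ℝ)]; exact (Nat.lt_floor_add_one _).le
  rw [← mul_le_mul_iff_right₀ hn', mul_add, mul_sum]
  calc ∑ p ∈ n.primesLE, (n : ℝ) * (log p / p)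
      ≤ ∑ p ∈ n.primesLE, (((n / p : ℕ) : ℝ) * log p + log p) := sum_le_sum fun p hp => by
        have hlog : 0 ≤ log p := log_nonneg (by exact_mod_cast (Nat.mem_primesLE.1 hp).2.one_le)
        rw [mul_div_assoc', mul_div_right_comm, ← add_one_mul]
        exact mul_le_mul_of_nonneg_right (hdiv p) hlog
    _ = ∑ p ∈ n.primesLE, ((n / p : ℕ) : ℝ) * log p + Chebyshev.theta n := by
        rw [sum_add_distrib, Chebyshev.theta_eq_sum_primesLE_log]
    _ ≤ n * log n + n * log 4 := by
        gcongr
        · refine (sum_primesLE_div_mul_log_le_log_factorial n).trans ?_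
          rw [← log_pow]
          exact log_le_log (by exact_mod_cast n.factorial_pos)
            (by exact_mod_cast n.factorial_le_pow)
        · rw [mul_comm]; exact Chebyshev.theta_le_log4_mul_x hn'.le

lemma log_four_div_log_two_sub_log_log_two_le : log 4 / log 2 - log (log 2) ≤ 3 := by
  have hlog2 : 1 / 2 ≤ log 2 := by linarith [log_two_gt_d9]
  have hlog4 : log 4 / log 2 = 2 := by
    rw [show (4 : ℝ) = 2 ^ 2 by norm_num, log_pow]
    field_simp
    norm_num
  have hinv : (log 2)⁻¹ ≤ 2 := by rw [inv_le_comm₀ (by linarith) two_pos]; linarith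
  linarith [one_sub_inv_le_log_of_pos (by linarith : 0 < log 2)]

lemma mul_inv_sub_inv_le_log_sub_log {x y : ℝ} (hx : 0 < x) (hy : 0 < y) :
    x * (x⁻¹ - y⁻¹) ≤ log y - log x := by
  have h := one_sub_inv_le_log_of_pos (div_pos hy hx)
  rw [log_div hy.ne' hx.ne', inv_div] at h
  rwa [mul_sub, mul_inv_cancel₀ hx.ne', ← div_eq_mul_inv]

lemma sub_inv_log_mul_sum_primesLE_log_div_le {i : ℕ} (hi : 2 ≤ i) :
    ((log i)⁻¹ - (log (i + 1 : ℕ))⁻¹) * ∑ p ∈ i.primesLE, log p / p ≤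
      (log (log (i + 1 : ℕ)) - log (log i)) + log 4 * ((log i)⁻¹ - (log (i + 1 : ℕ))⁻¹) := by
  have hlog : 0 < log i := log_pos (by exact_mod_cast hi)
  have hmono : log i ≤ log (i + 1 : ℕ) := log_le_log (by positivity) (by simp)
  have hanti : 0 ≤ (log i)⁻¹ - (log (i + 1 : ℕ))⁻¹ := sub_nonneg.2 (inv_anti₀ hlog hmono)
  calc ((log i)⁻¹ - (log (i + 1 : ℕ))⁻¹) * ∑ p ∈ i.primesLE, log p / p
      ≤ ((log i)⁻¹ - (log (i + 1 : ℕ))⁻¹) * (log i + log 4) := by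
        gcongr; exact sum_primesLE_log_div_le i
    _ = log i * ((log i)⁻¹ - (log (i + 1 : ℕ))⁻¹)
          + log 4 * ((log i)⁻¹ - (log (i + 1 : ℕ))⁻¹) := by ring
    _ ≤ _ := by
        gcongr
        exact mul_inv_sub_inv_le_log_sub_log hlog (hlog.trans_le hmono)

lemma sum_primesLE_inv_le {N : ℕ} (hN : 2 ≤ N) :
    ∑ p ∈ N.primesLE, (p : ℝ)⁻¹ ≤ log (log N) + 4 := by
  set f : ℕ → ℝ := fun i => (log i)⁻¹
  set g : ℕ → ℝ := fun i => if i.Prime then log i / i else 0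
  have hlog_pos {i : ℕ} (hi : 2 ≤ i) : 0 < log i := log_pos (by exact_mod_cast hi)
  have hG (k : ℕ) : ∑ i ∈ range (k + 1), g i = ∑ p ∈ k.primesLE, log p / p := by
    rw [Nat.primesLE_eq_filter_range, sum_filter]
  have hG2 : ∑ i ∈ range 2, g i = 0 := by simp [g, sum_range_succ]
  have hfg : ∑ p ∈ N.primesLE, (p : ℝ)⁻¹ = ∑ i ∈ Ico 2 (N + 1), f i • g i := by
    have hprimes : N.primesLE = (Ico 2 (N + 1)).filter Nat.Prime := by
      ext p
      simp only [Nat.mem_primesLE, mem_filter, mem_Ico]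
      exact ⟨fun ⟨hpN, hp⟩ => ⟨⟨hp.two_le, by omega⟩, hp⟩, fun ⟨hpN, hp⟩ => ⟨by omega, hp⟩⟩
    rw [hprimes, sum_filter]
    refine sum_congr rfl fun i hi => ?_
    have := (hlog_pos (mem_Ico.1 hi).1).ne'
    simp only [f, g, smul_eq_mul, mul_ite, mul_zero]
    split_ifs <;> field_simp
  have hstep (i : ℕ) (hi : i ∈ Ico 2 N) : -((f (i + 1) - f i) • ∑ j ∈ range (i + 1), g j) ≤
      (log (log (i + 1 : ℕ)) - log (log i)) + log 4 * (f i - f (i + 1)) := by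
    rw [hG, smul_eq_mul, ← neg_mul, neg_sub]
    exact sub_inv_log_mul_sum_primesLE_log_div_le (mem_Ico.1 hi).1
  calc ∑ p ∈ N.primesLE, (p : ℝ)⁻¹
      = f N • ∑ p ∈ N.primesLE, log p / p
          - ∑ i ∈ Ico 2 N, (f (i + 1) - f i) • ∑ j ∈ range (i + 1), g j := by
        rw [hfg, sum_Ico_by_parts f g (by omega : 2 < N + 1), hG2, Nat.add_sub_cancel, hG]
        simp
    _ ≤ f N * (log N + log 4) + ∑ i ∈ Ico 2 N,
          ((log (log (i + 1 : ℕ)) - log (log i)) + log 4 * (f i - f (i + 1))) := by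
        rw [sub_eq_add_neg, ← sum_neg_distrib, smul_eq_mul]
        exact add_le_add (mul_le_mul_of_nonneg_left (sum_primesLE_log_div_le N)
          (inv_nonneg.2 (log_natCast_nonneg N))) (sum_le_sum hstep)
    _ = log (log N) + (1 + log 4 / log 2 - log (log 2)) := by
        have hf : ∑ i ∈ Ico 2 N, (f i - f (i + 1)) = f 2 - f N := by
          rw [← neg_sub, ← sum_Ico_sub f hN, ← sum_neg_distrib]
          simp only [neg_sub]
        have hN' := (hlog_pos hN).ne'
        rw [sum_add_distrib, ← mul_sum, sum_Ico_sub (fun i => log (log i)) hN, hf]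
        simp only [f, Nat.cast_ofNat]
        field_simp
        ring
    _ ≤ log (log N) + 4 := by linarith [log_four_div_log_two_sub_log_log_two_le]

lemma sum_inv_isPrimePow_le_sum_primesLE_inv_sub_one (N : ℕ) :
    ∑ q ∈ Iic N with IsPrimePow q, (q : ℝ)⁻¹ ≤ ∑ p ∈ N.primesLE, ((p : ℝ) - 1)⁻¹ := by
  have hsub : {q ∈ Iic N | IsPrimePow q} ⊆
      (N.primesLE ×ˢ Ico 1 (N + 1)).image (fun x : ℕ × ℕ => x.1 ^ x.2) := by
    intro q hq
    obtain ⟨hqN, p, k, hp, hk, rfl⟩ := mem_filter.1 hq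
    have hp := hp.nat_prime
    have hqN := mem_Iic.1 hqN
    have hpq : p ≤ p ^ k := Nat.le_self_pow hk.ne' p
    have hkq : k < p ^ k := k.lt_two_pow_self.trans_le (Nat.pow_le_pow_left hp.two_le k)
    exact mem_image.2 ⟨(p, k), mem_product.2 ⟨Nat.mem_primesLE.2 ⟨hpq.trans hqN, hp⟩,
      mem_Ico.2 ⟨hk, by omega⟩⟩, rfl⟩
  calc ∑ q ∈ Iic N with IsPrimePow q, (q : ℝ)⁻¹
      ≤ ∑ q ∈ (N.primesLE ×ˢ Ico 1 (N + 1)).image (fun x : ℕ × ℕ => x.1 ^ x.2),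
          ((q : ℕ) : ℝ)⁻¹ :=
        sum_le_sum_of_subset_of_nonneg hsub fun _ _ _ => by positivity
    _ ≤ ∑ x ∈ N.primesLE ×ˢ Ico 1 (N + 1), ((x.1 ^ x.2 : ℕ) : ℝ)⁻¹ :=
        sum_image_le_of_nonneg fun _ _ => by positivity
    _ = ∑ p ∈ N.primesLE, ∑ k ∈ Ico 1 (N + 1), (p : ℝ)⁻¹ ^ k := by
        rw [sum_product]; push_cast; simp only [inv_pow]
    _ ≤ ∑ p ∈ N.primesLE, ((p : ℝ) - 1)⁻¹ := sum_le_sum fun p hp => by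
        have hp : (2 : ℝ) ≤ p := by exact_mod_cast (Nat.mem_primesLE.1 hp).2.two_le
        refine (geom_sum_Ico_le_of_lt_one (by positivity)
          (inv_lt_one_of_one_lt₀ (by linarith))).trans_eq ?_
        field_simp

lemma sum_primesLE_inv_sub_one_sub_inv_le_one (N : ℕ) :
    ∑ p ∈ N.primesLE, (((p : ℝ) - 1)⁻¹ - (p : ℝ)⁻¹) ≤ 1 := by
  have hsub : N.primesLE ⊆ Ico 2 (N + 2) := fun p hp => by
    have := Nat.mem_primesLE.1 hp
    exact mem_Ico.2 ⟨this.2.two_le, by omega⟩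
  have hterm {m : ℕ} (hm : m ∈ Ico 2 (N + 2)) : 0 ≤ ((m : ℝ) - 1)⁻¹ - (m : ℝ)⁻¹ := by
    have : (2 : ℝ) ≤ m := by exact_mod_cast (mem_Ico.1 hm).1
    exact sub_nonneg.2 (inv_anti₀ (by linarith) (by linarith))
  calc ∑ p ∈ N.primesLE, (((p : ℝ) - 1)⁻¹ - (p : ℝ)⁻¹)
      ≤ ∑ m ∈ Ico 2 (N + 2), (((m : ℝ) - 1)⁻¹ - (m : ℝ)⁻¹) :=
        sum_le_sum_of_subset_of_nonneg hsub fun m hm _ => hterm hm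
    _ = 1 - ((N : ℝ) + 1)⁻¹ := by
        set h : ℕ → ℝ := fun m => -((m : ℝ) - 1)⁻¹
        have hh (m : ℕ) : ((m : ℝ) - 1)⁻¹ - (m : ℝ)⁻¹ = h (m + 1) - h m := by
          simp only [h, Nat.cast_succ, add_sub_cancel_right]; ring
        rw [sum_congr rfl fun m _ => hh m, sum_Ico_sub h (by omega)]
        norm_num [h]
        ring
    _ ≤ 1 := sub_le_self _ (by positivity)

lemma sum_inv_isPrimePow_le {N : ℕ} (hN : 2 ≤ N) :
    ∑ q ∈ Iic N with IsPrimePow q, (q : ℝ)⁻¹ ≤ log (log N) + 5 := by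
  have h := sum_inv_isPrimePow_le_sum_primesLE_inv_sub_one N
  rw [← sub_add_cancel (∑ p ∈ N.primesLE, ((p : ℝ) - 1)⁻¹) (∑ p ∈ N.primesLE, (p : ℝ)⁻¹),
    ← sum_sub_distrib] at h
  linarith [sum_primesLE_inv_sub_one_sub_inv_le_one N, sum_primesLE_inv_le hN]

lemma eventually_sum_inv_isPrimePow_lt :
    ∀ᶠ N : ℕ in atTop, ∑ q ∈ Iic N with IsPrimePow q, (q : ℝ)⁻¹ < 2 * log (log N) := by
  have hloglog : Tendsto (fun N : ℕ => log (log N)) atTop atTop :=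
    tendsto_log_atTop.comp (tendsto_log_atTop.comp tendsto_natCast_atTop_atTop)
  filter_upwards [hloglog.eventually_gt_atTop 5, eventually_ge_atTop 2] with N hN5 hN2
  linarith [sum_inv_isPrimePow_le hN2]

theorem Finset.exists_subset_forall_lt_sum_filter {α ι : Type*} [DecidableEq ι] (w : α → ℝ)
    {θ : ι → ℝ} (hθ : ∀ i, 0 ≤ θ i) (r : ι → α → Prop) [∀ i, DecidablePred (r i)]
    (Q : Finset ι) (S : Finset α) (hQ : ∀ i, (∃ a ∈ S, r i a) → i ∈ Q) :
    ∃ T ⊆ S, ∑ a ∈ S, w a - ∑ i ∈ Q, θ i ≤ ∑ a ∈ T, w a ∧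
      ∀ i, (∃ a ∈ T, r i a) → θ i < ∑ a ∈ T with r i a, w a := by
  induction Q using Finset.strongInduction generalizing S with
  | H Q ih =>
    by_cases hgood : ∀ i, (∃ a ∈ S, r i a) → θ i < ∑ a ∈ S with r i a, w a
    · exact ⟨S, Subset.rfl, by linarith [sum_nonneg fun i (_ : i ∈ Q) => hθ i], hgood⟩
    push Not at hgood
    obtain ⟨i, hiS, hi⟩ := hgood
    have hiQ := hQ i hiS
    obtain ⟨T, hTS, hT, hTgood⟩ := ih (Q.erase i) (erase_ssubset hiQ) {a ∈ S | ¬ r i a}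
      fun j ⟨a, ha, hja⟩ => by
        rw [mem_filter] at ha
        exact mem_erase.2 ⟨by rintro rfl; exact ha.2 hja, hQ j ⟨a, ha.1, hja⟩⟩
    refine ⟨T, hTS.trans (filter_subset _ _), ?_, hTgood⟩
    rw [← sum_filter_add_sum_filter_not S (r i), ← add_sum_erase Q θ hiQ]
    linarith

theorem stmt_8_general (ρ μ : ℝ) (hρμ : μ < ρ) :
    ∃ N₀ : ℕ, ∀ N : ℕ, N₀ ≤ N → ∀ S : Finset ℕ,
      (∀ n ∈ S, 0 < n) →
      (∀ q : ℕ, IsPrimePow q → (∃ n ∈ S, q ∣ n) → q < N) →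
      ρ ≤ (∑ n ∈ S, (1 : ℝ) / n) →
      ∃ T ⊆ S, μ < (∑ n ∈ T, (1 : ℝ) / n) ∧
        ∀ q : ℕ, IsPrimePow q → (∃ n ∈ T, q ∣ n) →
          (ρ - μ) / (2 * q * Real.log (Real.log N)) <
            ∑ n ∈ T.filter (q ∣ ·), (1 : ℝ) / n := by
  obtain ⟨N₀, hN₀⟩ := eventually_atTop.1 eventually_sum_inv_isPrimePow_lt
  refine ⟨N₀, fun N hN S _ hSN hρS => ?_⟩
  set L := log (log N)
  have hsum := hN₀ N hN
  have hL : 0 < L := by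
    have : 0 ≤ ∑ q ∈ Iic N with IsPrimePow q, (q : ℝ)⁻¹ := sum_nonneg fun _ _ => by positivity
    linarith
  set θ : {q : ℕ // IsPrimePow q} → ℝ := fun q => (ρ - μ) / (2 * q * L)
  have hloss : ∑ q ∈ (Iic N).subtype IsPrimePow, θ q < ρ - μ := by
    calc ∑ q ∈ (Iic N).subtype IsPrimePow, θ q
        = (ρ - μ) / (2 * L) * ∑ q ∈ Iic N with IsPrimePow q, (q : ℝ)⁻¹ := by
          rw [sum_subtype_eq_sum_filter (f := fun q : ℕ => (ρ - μ) / (2 * q * L)), mul_sum]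
          refine sum_congr rfl fun q _ => ?_
          field_simp
      _ < (ρ - μ) / (2 * L) * (2 * L) := by gcongr
      _ = ρ - μ := by field_simp
  obtain ⟨T, hTS, hT, hTgood⟩ := exists_subset_forall_lt_sum_filter (fun n : ℕ => (1 : ℝ) / n)
    (θ := θ) (fun q => by positivity) (fun q n => (q : ℕ) ∣ n) ((Iic N).subtype IsPrimePow) S
    fun q hq => by simpa using (hSN q q.2 hq).le
  exact ⟨T, hTS, by linarith, fun q hq hqT => hTgood ⟨q, hq⟩ hqT⟩

/-- If `S` is a finite set of positive integers whose prime-power divisors are all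
`< N`, and `∑_{n∈S} 1/n ≥ ρ > μ > 0`, then for `N` large in terms of `ρ, μ` there is
`T ⊆ S` with `∑_{n∈T} 1/n > μ` and, for every prime power `q` dividing an element of
`T`, `∑_{n∈T, q∣n} 1/n > (ρ-μ)/(2q log log N)`. -/
theorem stmt_8 (ρ μ : ℝ) (hμ : 0 < μ) (hρμ : μ < ρ) :
    ∃ N₀ : ℕ, ∀ N : ℕ, N₀ ≤ N → ∀ S : Finset ℕ,
      (∀ n ∈ S, 0 < n) →
      (∀ q : ℕ, IsPrimePow q → (∃ n ∈ S, q ∣ n) → q < N) →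
      ρ ≤ (∑ n ∈ S, (1 : ℝ) / n) →
      ∃ T ⊆ S, μ < (∑ n ∈ T, (1 : ℝ) / n) ∧
        ∀ q : ℕ, IsPrimePow q → (∃ n ∈ T, q ∣ n) →
          (ρ - μ) / (2 * q * Real.log (Real.log N)) <
            ∑ n ∈ T.filter (q ∣ ·), (1 : ℝ) / n :=
  stmt_8_general ρ μ hρμ
end

section
/- Suppose J is a finite set of integers, each at least N, all of whose prime-power divisors are at most N^θ with θ < 1, and ∑_{n∈J} 1/n ≥ α > ν > 0. If N is sufficiently large in terms of α, ν, θ, then there exists a subset E ⊆ J such that ∑_{n∈E} 1/n ∈ [ν − 1/N, ν), and for every prime power q dividing some element of E, ∑_{n∈E, q|n} 1/n > min{ν, α − ν}/(5 q log log N). -/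
/-!
Weight each prime power `q` by `ρ q = c / (5 q log log N)`, where `c = min ν (α - ν)`. Chebyshev's
bound `θ(x) ≤ x log 4`, applied on dyadic blocks, gives `∑_{q ≤ x} 1/q ≤ 11 + 4 log log x` over
prime powers, so the prime powers dividing elements of `J` carry total weight at most `9c/10`.

Call a set heavy if the multiples in it of each of its prime-power divisors `q` have reciprocal sum
`> ρ q`. Discarding all multiples of a prime power that violates this, again and again, reaches a
heavy subset and loses at most the total weight, so its reciprocal sum stays `≥ ν`. Some element of
a heavy set can be deleted with the set staying heavy: otherwise every element is a multiple of some
`q` whose multiples have reciprocal sum at most `ρ q + 1/N`, and summing over the at most `N^θ` such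
`q` bounds the whole reciprocal sum by `9c/10 + N^(θ-1) < ν`. Deleting elements, each contributing
at most `1/N`, until the sum drops below `ν` lands it in `[ν - 1/N, ν)`.
-/

open Finset Real Filter

open Chebyshev in
theorem sum_one_div_prime_le_of_mem_Ioc {s : Finset ℕ} {j : ℕ} (hj : 1 ≤ j)
    (hs : ∀ p ∈ s, p.Prime ∧ p ∈ Ioc (2 ^ j) (2 ^ (j + 1))) :
    ∑ p ∈ s, (1 : ℝ) / p ≤ 4 / j := by
  have hlog2 : 0 < log 2 := log_pos one_lt_two
  have hcard : (#s : ℝ) * j ≤ 4 * 2 ^ j := by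
    have hlower : #s • (j * log 2) ≤ ∑ p ∈ s, log p := by
      refine card_nsmul_le_sum _ _ _ fun p hp ↦ ?_
      rw [← log_pow]
      exact log_le_log (by positivity) (mod_cast (mem_Ioc.1 (hs p hp).2).1.le)
    have hupper : ∑ p ∈ s, log p ≤ θ ((2 ^ (j + 1) : ℕ) : ℝ) := by
      rw [theta_eq_sum_primesLE_log]
      refine sum_le_sum_of_subset_of_nonneg (fun p hp ↦ ?_) fun p _ _ ↦ log_natCast_nonneg p
      exact Nat.mem_primesLE.2 ⟨(mem_Ioc.1 (hs p hp).2).2, (hs p hp).1⟩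
    have hcheb := theta_le_log4_mul_x (x := ((2 ^ (j + 1) : ℕ) : ℝ)) (by positivity)
    have hlog4 : log 4 = 2 * log 2 := by
      rw [show (4 : ℝ) = 2 ^ 2 by norm_num, log_pow]; norm_num
    rw [nsmul_eq_mul] at hlower
    refine le_of_mul_le_mul_right ?_ hlog2
    calc (#s : ℝ) * j * log 2 = #s * (j * log 2) := by ring
      _ ≤ log 4 * (2 ^ (j + 1) : ℕ) := (hlower.trans hupper).trans hcheb
      _ = 4 * 2 ^ j * log 2 := by rw [hlog4]; push_cast; ring
  have hj0 : (0 : ℝ) < j := by exact_mod_cast hj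
  calc ∑ p ∈ s, (1 : ℝ) / p ≤ ∑ _p ∈ s, (1 : ℝ) / 2 ^ j := by
        refine sum_le_sum fun p hp ↦ one_div_le_one_div_of_le (by positivity) ?_
        exact_mod_cast (mem_Ioc.1 (hs p hp).2).1.le
    _ = #s / 2 ^ j := by rw [sum_const, nsmul_eq_mul, mul_one_div]
    _ ≤ 4 / j := by rw [div_le_div_iff₀ (by positivity) hj0]; linarith

theorem mem_Ioc_two_pow_log_sub_one {p : ℕ} (hp : 2 ≤ p) :
    p ∈ Ioc (2 ^ Nat.log 2 (p - 1)) (2 ^ (Nat.log 2 (p - 1) + 1)) := by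
  have := Nat.pow_log_le_self 2 (by omega : p - 1 ≠ 0)
  have := Nat.lt_pow_succ_log_self one_lt_two (p - 1)
  exact mem_Ioc.2 ⟨by omega, by omega⟩

theorem log_natLog_two_le {x : ℕ} (hx : 2 ≤ x) : log (Nat.log 2 x) ≤ 1 + log (log x) := by
  have hx0 : 0 < log x := log_pos (by exact_mod_cast hx)
  have hJ : 1 ≤ Nat.log 2 x := Nat.le_log_of_pow_le one_lt_two (by omega)
  have hJx : (Nat.log 2 x : ℝ) * log 2 ≤ log x := by
    rw [← log_pow]
    exact log_le_log (by positivity) (mod_cast Nat.pow_log_le_self 2 (by omega))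
  have := log_two_gt_d9
  have := log_two_lt_d9
  calc log (Nat.log 2 x) ≤ log (2 * log x) := log_le_log (by positivity) (by nlinarith)
    _ = log 2 + log (log x) := log_mul two_ne_zero hx0.ne'
    _ ≤ 1 + log (log x) := by linarith

theorem sum_primesLE_one_div_le {x : ℕ} (hx : 2 ≤ x) :
    ∑ p ∈ Nat.primesLE x, (1 : ℝ) / p ≤ 9 + 4 * log (log x) := by
  set J := Nat.log 2 x
  have hmaps : ∀ p ∈ Nat.primesLE x, Nat.log 2 (p - 1) ∈ range (J + 1) := fun p hp ↦
    mem_range_succ_iff.2 (Nat.log_mono_right (by have := Nat.le_of_mem_primesLE hp; omega))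
  have hblock : ∀ j, ∀ p ∈ (Nat.primesLE x).filter (fun p ↦ Nat.log 2 (p - 1) = j),
      p.Prime ∧ p ∈ Ioc (2 ^ j) (2 ^ (j + 1)) := by
    intro j p hpj
    obtain ⟨hp, rfl⟩ := mem_filter.1 hpj
    exact ⟨Nat.prime_of_mem_primesLE hp,
      mem_Ioc_two_pow_log_sub_one (Nat.two_le_of_mem_primesLE hp)⟩
  have hblock0 : ∑ p ∈ Nat.primesLE x with Nat.log 2 (p - 1) = 0, (1 : ℝ) / p ≤ 1 / 2 := by
    calc _ ≤ ∑ p ∈ ({2} : Finset ℕ), (1 : ℝ) / p := by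
          refine sum_le_sum_of_subset_of_nonneg (fun p hp ↦ ?_) fun _ _ _ ↦ by positivity
          obtain ⟨hp, hpIoc⟩ := hblock 0 p hp
          have := (mem_Ioc.1 hpIoc).2
          exact mem_singleton.2 (by have := hp.two_le; omega)
      _ = 1 / 2 := by norm_num
  calc ∑ p ∈ Nat.primesLE x, (1 : ℝ) / p
      = ∑ j ∈ range (J + 1), ∑ p ∈ Nat.primesLE x with Nat.log 2 (p - 1) = j, (1 : ℝ) / p :=
        (sum_fiberwise_of_maps_to hmaps _).symm
    _ ≤ ∑ j ∈ range J, 4 / ((j + 1 : ℕ) : ℝ) + 1 / 2 := by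
        rw [sum_range_succ']
        exact add_le_add (sum_le_sum fun j _ ↦
          sum_one_div_prime_le_of_mem_Ioc (by omega) (hblock (j + 1))) hblock0
    _ = 4 * (harmonic J : ℝ) + 1 / 2 := by
        simp [harmonic, mul_sum, div_eq_mul_inv]
    _ ≤ 9 + 4 * log (log x) := by
        linarith [harmonic_le_one_add_log J, log_natLog_two_le hx]

theorem geom_sum_Ico_one_inv_le {p : ℝ} (hp : 2 ≤ p) (n : ℕ) :
    ∑ k ∈ Ico 1 n, (1 / p) ^ k ≤ 1 / p + 2 / p ^ 2 := by
  calc ∑ k ∈ Ico 1 n, (1 / p) ^ k ≤ (1 / p) ^ 1 / (1 - 1 / p) :=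
        geom_sum_Ico_le_of_lt_one (by positivity) (by rw [div_lt_one] <;> linarith)
    _ = 1 / p + 1 / (p * (p - 1)) := by
        have : p - 1 ≠ 0 := by linarith
        field_simp; ring
    _ ≤ 1 / p + 2 / p ^ 2 := by
        refine add_le_add_right ?_ _
        rw [div_le_div_iff₀ (by nlinarith) (by positivity)]
        nlinarith

theorem sum_primesLE_one_div_sq_le (x : ℕ) : ∑ p ∈ Nat.primesLE x, (1 : ℝ) / p ^ 2 ≤ 1 := by
  calc ∑ p ∈ Nat.primesLE x, (1 : ℝ) / p ^ 2 ≤ ∑ i ∈ Ioo 1 (x + 1), ((i : ℝ) ^ 2)⁻¹ := by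
        simp_rw [one_div]
        refine sum_le_sum_of_subset_of_nonneg (fun p hp ↦ ?_) fun _ _ _ ↦ by positivity
        have := Nat.le_of_mem_primesLE hp
        have := Nat.two_le_of_mem_primesLE hp
        exact mem_Ioo.2 ⟨by omega, by omega⟩
    _ ≤ 1 := (sum_Ioo_inv_sq_le 1 (x + 1)).trans (by norm_num)

theorem sum_primePow_one_div_le {x : ℕ} (hx : 2 ≤ x) :
    ∑ q ∈ (Iic x).filter IsPrimePow, (1 : ℝ) / q ≤ 11 + 4 * log (log x) := by
  have hcover : (Iic x).filter IsPrimePow ⊆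
      (Nat.primesLE x ×ˢ Ico 1 (x + 1)).image fun pk ↦ pk.1 ^ pk.2 := by
    intro q hq
    obtain ⟨hqx, hq⟩ := mem_filter.1 hq
    obtain ⟨p, k, hp, hk, rfl⟩ := (isPrimePow_nat_iff q).1 hq
    have hqx : p ^ k ≤ x := mem_Iic.1 hqx
    have hpq : p ≤ p ^ k := Nat.le_self_pow hk.ne' p
    have hkq : k < p ^ k := Nat.lt_two_pow_self.trans_le (Nat.pow_le_pow_left hp.two_le k)
    exact mem_image.2 ⟨(p, k), mem_product.2 ⟨Nat.mem_primesLE.2 ⟨hpq.trans hqx, hp⟩,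
      mem_Ico.2 ⟨hk, by omega⟩⟩, rfl⟩
  calc ∑ q ∈ (Iic x).filter IsPrimePow, (1 : ℝ) / q
      ≤ ∑ q ∈ (Nat.primesLE x ×ˢ Ico 1 (x + 1)).image (fun pk ↦ pk.1 ^ pk.2), (1 : ℝ) / q :=
        sum_le_sum_of_subset_of_nonneg hcover fun _ _ _ ↦ by positivity
    _ ≤ ∑ pk ∈ Nat.primesLE x ×ˢ Ico 1 (x + 1), (1 : ℝ) / ((pk.1 ^ pk.2 : ℕ) : ℝ) :=
        sum_image_le_of_nonneg fun _ _ ↦ by positivity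
    _ = ∑ p ∈ Nat.primesLE x, ∑ k ∈ Ico 1 (x + 1), (1 / (p : ℝ)) ^ k := by
        rw [sum_product]; push_cast; simp_rw [one_div_pow]
    _ ≤ ∑ p ∈ Nat.primesLE x, (1 / (p : ℝ) + 2 / p ^ 2) :=
        sum_le_sum fun p hp ↦
          geom_sum_Ico_one_inv_le (by exact_mod_cast Nat.two_le_of_mem_primesLE hp) _
    _ = ∑ p ∈ Nat.primesLE x, 1 / (p : ℝ) + 2 * ∑ p ∈ Nat.primesLE x, 1 / (p : ℝ) ^ 2 := by
        rw [sum_add_distrib, mul_sum]; simp_rw [mul_one_div]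
    _ ≤ 11 + 4 * log (log x) := by
        have := sum_primesLE_one_div_le hx
        have := sum_primesLE_one_div_sq_le x
        linarith

noncomputable def recipSum (F : Finset ℕ) : ℝ := ∑ n ∈ F, (1 : ℝ) / n

-- `Q_F` in the paper; since `Nat.divisors 0 = ∅`, an element `0 ∈ F` contributes nothing.
def primePowDivisors (F : Finset ℕ) : Finset ℕ := (F.biUnion Nat.divisors).filter IsPrimePow

def IsHeavy (ρ : ℕ → ℝ) (F : Finset ℕ) : Prop :=
  ∀ q ∈ primePowDivisors F, ρ q < recipSum (F.filter (q ∣ ·))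

lemma mem_primePowDivisors {q : ℕ} {F : Finset ℕ} :
    q ∈ primePowDivisors F ↔ IsPrimePow q ∧ ∃ n ∈ F, n ≠ 0 ∧ q ∣ n := by
  simp only [primePowDivisors, mem_filter, mem_biUnion, Nat.mem_divisors]
  tauto

lemma primePowDivisors_mono {F G : Finset ℕ} (h : F ⊆ G) :
    primePowDivisors F ⊆ primePowDivisors G :=
  filter_subset_filter _ (biUnion_subset_biUnion_of_subset_left _ h)

lemma recipSum_eq_add_recipSum_erase {F : Finset ℕ} {n : ℕ} (hn : n ∈ F) :
    recipSum F = 1 / n + recipSum (F.erase n) :=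
  (add_sum_erase F _ hn).symm

lemma recipSum_filter_add_filter_not (F : Finset ℕ) (P : ℕ → Prop) [DecidablePred P] :
    recipSum (F.filter P) + recipSum (F.filter (¬ P ·)) = recipSum F :=
  sum_filter_add_sum_filter_not F P _

lemma recipSum_le_sum_recipSum_filter_dvd {F C : Finset ℕ} (hC : ∀ n ∈ F, ∃ q ∈ C, q ∣ n) :
    recipSum F ≤ ∑ q ∈ C, recipSum (F.filter (q ∣ ·)) := by
  simp only [recipSum, sum_filter]
  rw [sum_comm]
  refine sum_le_sum fun n hn ↦ ?_
  obtain ⟨q, hq, hqn⟩ := hC n hn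
  calc (1 : ℝ) / n = if q ∣ n then (1 : ℝ) / n else 0 := (if_pos hqn).symm
    _ ≤ ∑ q ∈ C, if q ∣ n then (1 : ℝ) / n else 0 :=
      single_le_sum (f := fun q ↦ if q ∣ n then (1 : ℝ) / n else 0)
        (fun _ _ ↦ by split <;> positivity) hq

section Heavy

variable {ρ : ℕ → ℝ} {δ : ℝ}

theorem exists_isHeavy_subset (hρ : ∀ q, 0 ≤ ρ q) (F : Finset ℕ) :
    ∃ F' ⊆ F, IsHeavy ρ F' ∧ recipSum F ≤ recipSum F' + ∑ q ∈ primePowDivisors F, ρ q := by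
  induction F using Finset.strongInduction with
  | H F ih =>
  by_cases hF : IsHeavy ρ F
  · exact ⟨F, subset_rfl, hF, le_add_of_nonneg_right (sum_nonneg fun q _ ↦ hρ q)⟩
  obtain ⟨q, hq, hlight⟩ : ∃ q ∈ primePowDivisors F, recipSum (F.filter (q ∣ ·)) ≤ ρ q := by
    simpa [IsHeavy] using hF
  obtain ⟨-, n, hn, -, hqn⟩ := mem_primePowDivisors.1 hq
  set G := F.filter (¬ q ∣ ·)
  have hGF : G ⊂ F := filter_ssubset.2 ⟨n, hn, not_not.2 hqn⟩
  have hqG : q ∉ primePowDivisors G := fun h ↦ by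
    obtain ⟨-, m, hm, -, hqm⟩ := mem_primePowDivisors.1 h
    exact (mem_filter.1 hm).2 hqm
  have hsumG : ρ q + ∑ q ∈ primePowDivisors G, ρ q ≤ ∑ q ∈ primePowDivisors F, ρ q := by
    rw [← sum_insert hqG]
    refine sum_le_sum_of_subset_of_nonneg (insert_subset hq ?_) fun q _ _ ↦ hρ q
    exact primePowDivisors_mono hGF.subset
  obtain ⟨F', hF'G, hF', hGF'⟩ := ih G hGF
  refine ⟨F', hF'G.trans hGF.subset, hF', ?_⟩
  rw [← recipSum_filter_add_filter_not F (q ∣ ·)]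
  linarith

theorem IsHeavy.exists_isHeavy_erase {F : Finset ℕ} (hF : IsHeavy ρ F) (hρ : ∀ q, 0 ≤ ρ q)
    (hδ : 0 ≤ δ) (hFδ : ∀ n ∈ F, 1 / (n : ℝ) ≤ δ)
    (hbudget : ∑ q ∈ primePowDivisors F, (ρ q + δ) < recipSum F) :
    ∃ n ∈ F, IsHeavy ρ (F.erase n) := by
  by_contra! hlight
  set C := (primePowDivisors F).filter fun q ↦ recipSum (F.filter (q ∣ ·)) ≤ ρ q + δ
  have hC : ∀ n ∈ F, ∃ q ∈ C, q ∣ n := by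
    intro n hn
    obtain ⟨q, hq, hqlight⟩ : ∃ q ∈ primePowDivisors (F.erase n),
        recipSum ((F.erase n).filter (q ∣ ·)) ≤ ρ q := by
      simpa [IsHeavy] using hlight n hn
    have hqF := primePowDivisors_mono (erase_subset n F) hq
    rw [filter_erase] at hqlight
    have hqn : q ∣ n := by
      by_contra hqn
      rw [erase_eq_of_notMem fun h ↦ hqn (mem_filter.1 h).2] at hqlight
      exact (hF q hqF).not_ge hqlight
    refine ⟨q, mem_filter.2 ⟨hqF, ?_⟩, hqn⟩
    rw [recipSum_eq_add_recipSum_erase (mem_filter.2 ⟨hn, hqn⟩)]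
    linarith [hFδ n hn]
  have := calc recipSum F ≤ ∑ q ∈ C, recipSum (F.filter (q ∣ ·)) :=
        recipSum_le_sum_recipSum_filter_dvd hC
    _ ≤ ∑ q ∈ C, (ρ q + δ) := sum_le_sum fun q hq ↦ (mem_filter.1 hq).2
    _ ≤ ∑ q ∈ primePowDivisors F, (ρ q + δ) :=
        sum_le_sum_of_subset_of_nonneg (filter_subset _ _) fun q _ _ ↦ add_nonneg (hρ q) hδ
  linarith

theorem IsHeavy.exists_subset_recipSum_mem_Ico {ν : ℝ} {F : Finset ℕ} (hF : IsHeavy ρ F)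
    (hρ : ∀ q, 0 ≤ ρ q) (hδ : 0 ≤ δ) (hFδ : ∀ n ∈ F, 1 / (n : ℝ) ≤ δ)
    (hbudget : ∑ q ∈ primePowDivisors F, (ρ q + δ) < ν) (hν : ν ≤ recipSum F) :
    ∃ E ⊆ F, IsHeavy ρ E ∧ recipSum E ∈ Set.Ico (ν - δ) ν := by
  induction F using Finset.strongInduction with
  | H F ih =>
  obtain ⟨n, hn, hFn⟩ := hF.exists_isHeavy_erase hρ hδ hFδ (hbudget.trans_le hν)
  have hsplit := recipSum_eq_add_recipSum_erase hn
  by_cases hlt : recipSum (F.erase n) < ν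
  · exact ⟨F.erase n, erase_subset n F, hFn, by linarith [hFδ n hn], hlt⟩
  have hbudget' : ∑ q ∈ primePowDivisors (F.erase n), (ρ q + δ) < ν := by
    refine lt_of_le_of_lt (sum_le_sum_of_subset_of_nonneg ?_ fun q _ _ ↦ ?_) hbudget
    · exact primePowDivisors_mono (erase_subset n F)
    · exact add_nonneg (hρ q) hδ
  obtain ⟨E, hEF, hE⟩ := ih (F.erase n) (erase_ssubset hn) hFn
    (fun m hm ↦ hFδ m (mem_of_mem_erase hm)) hbudget' (not_lt.1 hlt)
  exact ⟨E, hEF.trans (erase_subset n F), hE⟩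

end Heavy

theorem card_le_of_forall_mem_le {s : Finset ℕ} {y : ℝ} (hy : 0 ≤ y)
    (hs : ∀ q ∈ s, 0 < q ∧ (q : ℝ) ≤ y) : (#s : ℝ) ≤ y := by
  have hsub : s ⊆ Icc 1 ⌊y⌋₊ := fun q hq ↦
    mem_Icc.2 ⟨(hs q hq).1, Nat.le_floor (hs q hq).2⟩
  calc (#s : ℝ) ≤ #(Icc 1 ⌊y⌋₊) := mod_cast card_le_card hsub
    _ = ⌊y⌋₊ := by simp
    _ ≤ y := Nat.floor_le hy

theorem card_primePowDivisors_div_le {J : Finset ℕ} {N : ℕ} {θ : ℝ} (hN : 0 < N)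
    (hJ : ∀ q ∈ primePowDivisors J, (q : ℝ) ≤ (N : ℝ) ^ θ) :
    (#(primePowDivisors J) : ℝ) / N ≤ (N : ℝ) ^ (θ - 1) := by
  have hN0 : (0 : ℝ) < N := by exact_mod_cast hN
  rw [rpow_sub_one hN0.ne']
  refine div_le_div_of_nonneg_right (card_le_of_forall_mem_le (by positivity) fun q hq ↦ ?_) hN0.le
  exact ⟨(mem_primePowDivisors.1 hq).1.pos, hJ q hq⟩

theorem sum_primePowDivisors_div_le {J : Finset ℕ} {N : ℕ} {θ c : ℝ} (hc : 0 ≤ c) (hθ : θ ≤ 1)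
    (hN : 2 ≤ N) (hL : 22 ≤ log (log N))
    (hJ : ∀ q ∈ primePowDivisors J, (q : ℝ) ≤ (N : ℝ) ^ θ) :
    ∑ q ∈ primePowDivisors J, c / (5 * q * log (log N)) ≤ 9 / 10 * c := by
  have hsum : ∑ q ∈ primePowDivisors J, (1 : ℝ) / q ≤ 11 + 4 * log (log N) := by
    refine le_trans (sum_le_sum_of_subset_of_nonneg (fun q hq ↦ ?_) fun _ _ _ ↦ by positivity)
      (sum_primePow_one_div_le hN)
    have hqN : (q : ℝ) ≤ N :=
      (hJ q hq).trans (rpow_le_self_of_one_le (by exact_mod_cast (by omega : 1 ≤ N)) hθ)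
    exact mem_filter.2 ⟨mem_Iic.2 (mod_cast hqN), (mem_primePowDivisors.1 hq).1⟩
  calc ∑ q ∈ primePowDivisors J, c / (5 * q * log (log N))
      = c / (5 * log (log N)) * ∑ q ∈ primePowDivisors J, (1 : ℝ) / q := by
        rw [mul_sum]; congr 1 with q; field_simp
    _ ≤ c / (5 * log (log N)) * (11 + 4 * log (log N)) := by gcongr
    _ ≤ 9 / 10 * c := by
        rw [div_mul_eq_mul_div, div_le_iff₀ (by positivity)]
        nlinarith

theorem eventually_le_log_log_and_rpow_sub_one_lt {θ ε : ℝ} (hθ : θ < 1) (hε : 0 < ε) :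
    ∀ᶠ N : ℕ in atTop, 2 ≤ N ∧ 22 ≤ log (log N) ∧ (N : ℝ) ^ (θ - 1) < ε := by
  have hN : Tendsto (fun N : ℕ ↦ (N : ℝ)) atTop atTop := tendsto_natCast_atTop_atTop
  refine (eventually_ge_atTop 2).and <|
    (((tendsto_log_atTop.comp tendsto_log_atTop).comp hN).eventually_ge_atTop 22).and ?_
  have := ((tendsto_rpow_neg_atTop (sub_pos.2 hθ)).comp hN).eventually_lt_const hε
  simpa [neg_sub] using this

/-- Proposition 2: if `J` is a finite set of integers `≥ N` all of whose prime-power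
divisors are `≤ N^θ` with `θ < 1`, and `∑_{n∈J} 1/n ≥ α > ν > 0`, then for `N` large
in terms of `α, ν, θ` there is `E ⊆ J` with `∑_{n∈E} 1/n ∈ [ν - 1/N, ν)` and, for
every prime power `q` dividing an element of `E`,
`∑_{n∈E, q∣n} 1/n > min(ν, α-ν)/(5q log log N)`. -/
theorem stmt_10 (α ν θ : ℝ) (hν : 0 < ν) (hαν : ν < α) (hθ : θ < 1) :
    ∃ N₀ : ℕ, ∀ N : ℕ, N₀ ≤ N → ∀ J : Finset ℕ,
      (∀ n ∈ J, N ≤ n) →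
      (∀ n ∈ J, ∀ q : ℕ, IsPrimePow q → q ∣ n → (q : ℝ) ≤ (N : ℝ) ^ θ) →
      α ≤ (∑ n ∈ J, (1 : ℝ) / n) →
      ∃ E ⊆ J,
        (ν - 1 / N ≤ (∑ n ∈ E, (1 : ℝ) / n) ∧ (∑ n ∈ E, (1 : ℝ) / n) < ν) ∧
        ∀ q : ℕ, IsPrimePow q → (∃ n ∈ E, q ∣ n) →
          min ν (α - ν) / (5 * q * Real.log (Real.log N)) <
            ∑ n ∈ E.filter (q ∣ ·), (1 : ℝ) / n := by
  set c := min ν (α - ν)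
  have hc : 0 < c := lt_min hν (sub_pos.2 hαν)
  obtain ⟨N₀, hN₀⟩ := eventually_atTop.1 <|
    eventually_le_log_log_and_rpow_sub_one_lt hθ (div_pos hν (by norm_num : (0 : ℝ) < 10))
  refine ⟨N₀, fun N hN J hJN hJθ hJα ↦ ?_⟩
  obtain ⟨h2N, hL, hrpow⟩ := hN₀ N hN
  have hQJ : ∀ q ∈ primePowDivisors J, (q : ℝ) ≤ (N : ℝ) ^ θ := fun q hq ↦ by
    obtain ⟨hq, n, hn, -, hqn⟩ := mem_primePowDivisors.1 hq
    exact hJθ n hn q hq hqn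
  set ρ : ℕ → ℝ := fun q ↦ c / (5 * q * log (log N))
  have hρ : ∀ q, 0 ≤ ρ q := fun q ↦ by positivity
  have hρJ : ∑ q ∈ primePowDivisors J, ρ q ≤ 9 / 10 * c :=
    sum_primePowDivisors_div_le hc.le hθ.le h2N hL hQJ
  have hcardJ := card_primePowDivisors_div_le (by omega) hQJ
  obtain ⟨F, hFJ, hF, hJF⟩ := exists_isHeavy_subset hρ J
  have hbudget : ∑ q ∈ primePowDivisors F, (ρ q + 1 / N) < ν :=
    calc ∑ q ∈ primePowDivisors F, (ρ q + 1 / N)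
        ≤ ∑ q ∈ primePowDivisors J, (ρ q + 1 / N) :=
          sum_le_sum_of_subset_of_nonneg (primePowDivisors_mono hFJ) fun q _ _ ↦ by positivity
      _ = ∑ q ∈ primePowDivisors J, ρ q + #(primePowDivisors J) / N := by
          rw [sum_add_distrib, sum_const, nsmul_eq_mul, mul_one_div]
      _ < ν := by linarith [min_le_left ν (α - ν)]
  have hJα : α ≤ recipSum J := hJα
  obtain ⟨E, hEF, hE, hEν⟩ := hF.exists_subset_recipSum_mem_Ico hρ (by positivity)
    (fun n hn ↦ one_div_le_one_div_of_le (by positivity) (mod_cast hJN n (hFJ hn))) hbudget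
    (by linarith [min_le_right ν (α - ν)])
  refine ⟨E, hEF.trans hFJ, hEν, fun q hq ⟨n, hn, hqn⟩ ↦ hE q ?_⟩
  exact mem_primePowDivisors.2 ⟨hq, n, hn, by have := hJN n (hFJ (hEF hn)); omega, hqn⟩
end

section
/- Let y = exp((1/8 − θ/2) log N / log log N) with 0 < θ < 1/4, let ω₀ = log log N / log log log log N, and let k = (log log log N)³. Then for N sufficiently large, ∑_{d: p|d ⇒ y < p < N, ω(d) ≥ ω₀} 1/d ≤ k^{−ω₀} ∏_{y < p < N} (1 + k/(p−1)) ≪ 1/(log N)². -/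
/-!
Rankin's trick: as `k ≥ 1`, every `d` with `ω(d) ≥ ω₀` has `1/d ≤ k^{-ω₀} k^{ω(d)}/d`, and the
Euler product of the multiplicative function `k^{ω(d)}/d` over the primes in `(y, N)` is exactly
`∏ (1 + k/(p-1))`.

For the second bound, `∏ (1 + k/(p-1)) ≤ exp (2k ∑ 1/p)`. Chebyshev's `primorial n ≤ 4^n` shows
that the primes in a dyadic block `[2^i, 2^(i+1))` have reciprocal sum at most `4/i`, so
`∑_{y<p<N} 1/p ≤ 4 (1 + log (2 log N / log y)) = O(log log log N)`. The product is then at most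
`exp (O(k log log log N)) ≤ exp (log log N) = log N`, while `k^{-ω₀} = (log N)^{-3}`.
-/

open Finset Real
open scoped Classical

lemma pow_card_primeFactors_div_mul_of_coprime (k : ℝ) {m n : ℕ} (h : m.Coprime n) :
    k ^ (m * n).primeFactors.card / ((m * n : ℕ) : ℝ) =
      k ^ m.primeFactors.card / m * (k ^ n.primeFactors.card / n) := by
  rw [h.primeFactors_mul, card_union_of_disjoint h.disjoint_primeFactors, pow_add, Nat.cast_mul,
    mul_div_mul_comm]

lemma hasSum_pow_card_primeFactors_div_prime_pow (k : ℝ) {p : ℕ} (hp : p.Prime) :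
    HasSum (fun e : ℕ => k ^ (p ^ e).primeFactors.card / ((p ^ e : ℕ) : ℝ)) (1 + k / (p - 1)) := by
  have hp1 : (1 : ℝ) < p := by exact_mod_cast hp.one_lt
  have hterm : ∀ e : ℕ, k ^ (p ^ (e + 1)).primeFactors.card / ((p ^ (e + 1) : ℕ) : ℝ) =
      k / p * (p : ℝ)⁻¹ ^ e := fun e => by
    rw [Nat.primeFactors_prime_pow e.succ_ne_zero hp]
    simp only [card_singleton, pow_succ, Nat.cast_mul, Nat.cast_pow, inv_pow]
    field_simp
  have hvalue : 1 + k / (p - 1) - ∑ e ∈ range 1, k ^ (p ^ e).primeFactors.card / ((p ^ e : ℕ) : ℝ)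
      = k / p * (1 - (p : ℝ)⁻¹)⁻¹ := by
    have : (p : ℝ) - 1 ≠ 0 := by linarith
    simp only [range_one, sum_singleton, pow_zero, Nat.primeFactors_one, card_empty,
      Nat.cast_one, div_one, add_sub_cancel_left]
    field_simp
  rw [← hasSum_nat_add_iff' 1, hvalue]
  simpa only [hterm] using (hasSum_geometric_of_lt_one (by positivity)
    (inv_lt_one_of_one_lt₀ hp1)).mul_left (k / p)

theorem hasSum_pow_card_primeFactors_div_factoredNumbers (k : ℝ) {P : Finset ℕ}
    (hP : ∀ p ∈ P, p.Prime) :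
    HasSum (fun m : Nat.factoredNumbers P => k ^ (m : ℕ).primeFactors.card / (m : ℝ))
      (∏ p ∈ P, (1 + k / (p - 1))) := by
  have h := (EulerProduct.summable_and_hasSum_factoredNumbers_prod_filter_prime_tsum
    (f := fun m : ℕ => k ^ m.primeFactors.card / (m : ℝ)) (by simp)
    (pow_card_primeFactors_div_mul_of_coprime k)
    (fun hp => summable_abs_iff.2 (hasSum_pow_card_primeFactors_div_prime_pow k hp).summable) P).2
  rwa [filter_true_of_mem hP, prod_congr rfl fun p hp =>
    (hasSum_pow_card_primeFactors_div_prime_pow k (hP p hp)).tsum_eq] at h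

theorem tsum_one_div_le_rpow_neg_mul_prod {k w : ℝ} (hk : 1 ≤ k) {P : Finset ℕ}
    (hP : ∀ p ∈ P, p.Prime) {S : Set ℕ} (hSP : S ⊆ Nat.factoredNumbers P)
    (hSw : ∀ d ∈ S, w ≤ d.primeFactors.card) :
    ∑' d : S, (1 : ℝ) / d ≤ k ^ (-w) * ∏ p ∈ P, (1 + k / (p - 1)) := by
  have hE := (hasSum_pow_card_primeFactors_div_factoredNumbers k hP).mul_left (k ^ (-w))
  have hle : ∀ d : S, (1 : ℝ) / d ≤ k ^ (-w) * (k ^ (d : ℕ).primeFactors.card / d) := fun d => by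
    rw [← mul_div_assoc, ← rpow_natCast, ← rpow_add (by linarith)]
    gcongr
    exact one_le_rpow hk (by linarith [hSw d d.2])
  rw [← hE.tsum_eq]
  refine Summable.tsum_le_tsum_of_inj (Set.inclusion hSP) (Set.inclusion_injective hSP)
    (fun _ _ => by positivity) hle ?_ hE.summable
  exact (hE.summable.comp_injective (Set.inclusion_injective hSP)).of_nonneg_of_le
    (fun _ => by positivity) hle

lemma mul_card_le_of_log_two_eq {i : ℕ} {t : Finset ℕ}
    (ht : ∀ p ∈ t, p.Prime ∧ Nat.log 2 p = i) : i * #t ≤ 4 * 2 ^ i := by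
  have hlower : ∀ p ∈ t, 2 ^ i ≤ p := fun p hp => by
    simpa [(ht p hp).2] using Nat.pow_log_le_self 2 (ht p hp).1.ne_zero
  have hsub : t ⊆ {p ∈ range (2 ^ (i + 1) + 1) | p.Prime} := fun p hp => by
    have := Nat.lt_pow_succ_log_self one_lt_two p
    rw [(ht p hp).2] at this
    simp only [mem_filter, mem_range]
    exact ⟨by omega, (ht p hp).1⟩
  have : 2 ^ (i * #t) ≤ 2 ^ (4 * 2 ^ i) := calc
    2 ^ (i * #t) = (2 ^ i) ^ #t := pow_mul 2 i #t
    _ ≤ ∏ p ∈ t, p := pow_card_le_prod t id _ hlower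
    _ ≤ primorial (2 ^ (i + 1)) :=
      prod_le_prod_of_subset_of_one_le' hsub fun p hp _ => (mem_filter.1 hp).2.one_lt.le
    _ ≤ 4 ^ 2 ^ (i + 1) := primorial_le_four_pow _
    _ = 2 ^ (4 * 2 ^ i) := by rw [show 4 = 2 ^ 2 by rfl, ← pow_mul]; ring_nf
  exact (Nat.pow_le_pow_iff_right one_lt_two).1 this

lemma sum_one_div_le_of_log_two_eq {i : ℕ} (hi : 0 < i) {t : Finset ℕ}
    (ht : ∀ p ∈ t, p.Prime ∧ Nat.log 2 p = i) : ∑ p ∈ t, (1 : ℝ) / p ≤ 4 / i := by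
  have hlower : ∀ p ∈ t, (1 : ℝ) / p ≤ 1 / 2 ^ i := fun p hp => by
    have := Nat.pow_log_le_self 2 (ht p hp).1.ne_zero
    rw [(ht p hp).2] at this
    gcongr
    exact_mod_cast this
  have hcard : (i : ℝ) * #t ≤ 4 * 2 ^ i := by exact_mod_cast mul_card_le_of_log_two_eq ht
  calc ∑ p ∈ t, (1 : ℝ) / p ≤ #t * (1 / 2 ^ i) := by
        simpa using sum_le_card_nsmul t _ _ hlower
    _ ≤ 4 / i := by
        rw [le_div_iff₀ (by exact_mod_cast hi)]
        field_simp
        linarith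

lemma sum_Icc_inv_le {a b : ℕ} (ha : 1 ≤ a) (hab : a ≤ b + 1) :
    ∑ i ∈ Icc a b, (i : ℝ)⁻¹ ≤ 1 + log b - log a := by
  have hsplit : ∑ i ∈ Ico 1 a, (i : ℝ)⁻¹ + ∑ i ∈ Icc a b, (i : ℝ)⁻¹ = harmonic b := by
    rw [harmonic_eq_sum_Icc, ← Ico_add_one_right_eq_Icc, ← Ico_add_one_right_eq_Icc,
      ← sum_Ico_consecutive _ ha hab]
    push_cast
    rfl
  have hlower : log a ≤ ∑ i ∈ Ico 1 a, (i : ℝ)⁻¹ := by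
    have := log_add_one_le_harmonic (a - 1)
    rw [harmonic_eq_sum_Icc, ← Ico_add_one_right_eq_Icc, Nat.sub_add_cancel ha] at this
    push_cast at this
    exact this
  linarith [harmonic_le_one_add_log b]

lemma sum_one_div_primes_two_pow_le {a n : ℕ} (ha : 1 ≤ a) (han : 2 ^ a ≤ n) :
    ∑ p ∈ range n with p.Prime ∧ 2 ^ a ≤ p, (1 : ℝ) / p ≤
      4 * (1 + log (Nat.log 2 n) - log a) := by
  have hmaps : ∀ p ∈ {p ∈ range n | p.Prime ∧ 2 ^ a ≤ p}, Nat.log 2 p ∈ Icc a (Nat.log 2 n) :=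
    fun p hp => by
      simp only [mem_filter, mem_range] at hp
      exact mem_Icc.2 ⟨Nat.le_log_of_pow_le one_lt_two hp.2.2, Nat.log_mono_right hp.1.le⟩
  rw [← sum_fiberwise_of_maps_to hmaps]
  calc _ ≤ ∑ i ∈ Icc a (Nat.log 2 n), (4 : ℝ) / i := by
        refine sum_le_sum fun i hi =>
          sum_one_div_le_of_log_two_eq (by linarith [(mem_Icc.1 hi).1]) fun p hp => ?_
        simp only [mem_filter] at hp
        exact ⟨hp.1.2.1, hp.2⟩
    _ = 4 * ∑ i ∈ Icc a (Nat.log 2 n), (i : ℝ)⁻¹ := by simp [mul_sum, div_eq_mul_inv]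
    _ ≤ 4 * (1 + log (Nat.log 2 n) - log a) := by
        gcongr
        exact sum_Icc_inv_le ha (by linarith [Nat.le_log_of_pow_le one_lt_two han])

noncomputable def primesBetween (y : ℝ) (n : ℕ) : Finset ℕ :=
  (range n).filter (fun p : ℕ => p.Prime ∧ y < (p : ℝ))

lemma mem_primesBetween {y : ℝ} {n p : ℕ} :
    p ∈ primesBetween y n ↔ p < n ∧ p.Prime ∧ y < (p : ℝ) := by
  rw [primesBetween, mem_filter, mem_range]

theorem sum_one_div_primesBetween_le {y : ℝ} {n : ℕ} (hy : 4 ≤ y) (hyn : y < n) :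
    ∑ p ∈ primesBetween y n, (1 : ℝ) / p ≤ 4 * (1 + log (2 * log n / log y)) := by
  set a := Nat.log 2 ⌊y⌋₊
  set b := Nat.log 2 n
  have hfloor : 4 ≤ ⌊y⌋₊ := Nat.le_floor (by exact_mod_cast hy)
  have ha : 1 ≤ a := Nat.log_pos one_lt_two (by omega)
  have hay : (2 : ℝ) ^ a ≤ y := calc
    (2 : ℝ) ^ a ≤ ⌊y⌋₊ := by exact_mod_cast Nat.pow_log_le_self 2 (by omega)
    _ ≤ y := Nat.floor_le (by linarith)
  have hya : y < 2 ^ (a + 1) := calc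
    y < ⌊y⌋₊ + 1 := Nat.lt_floor_add_one y
    _ ≤ 2 ^ (a + 1) := by exact_mod_cast Nat.lt_pow_succ_log_self one_lt_two _
  have han : 2 ^ a ≤ n := by exact_mod_cast hay.trans hyn.le
  have hab : a ≤ b := Nat.le_log_of_pow_le one_lt_two han
  have hsub : primesBetween y n ⊆ {p ∈ range n | p.Prime ∧ 2 ^ a ≤ p} := fun p hp => by
    rw [mem_primesBetween] at hp
    simp only [mem_filter, mem_range]
    exact ⟨hp.1, hp.2.1, by exact_mod_cast hay.trans hp.2.2.le⟩
  have haR : (1 : ℝ) ≤ a := by exact_mod_cast ha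
  have hbR : (1 : ℝ) ≤ b := by exact_mod_cast ha.trans hab
  have hlog2 : 0 < log 2 := log_pos one_lt_two
  have hlogy : log y < 2 * a * log 2 := by
    have := log_lt_log (by linarith) hya
    rw [log_pow] at this
    push_cast at this
    nlinarith
  have hlogn : b * log 2 ≤ log n := by
    rw [← log_pow]
    exact log_le_log (by positivity)
      (by exact_mod_cast Nat.pow_log_le_self 2 ((Nat.two_pow_pos a).trans_le han).ne')
  have hratio : log b - log a ≤ log (2 * log n / log y) := by
    have hlogy0 : 0 < log y := log_pos (by linarith)
    rw [← log_div (by positivity) (by positivity)]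
    refine log_le_log (by positivity) ?_
    rw [div_le_div_iff₀ (by positivity) hlogy0]
    nlinarith
  calc _ ≤ ∑ p ∈ range n with p.Prime ∧ 2 ^ a ≤ p, (1 : ℝ) / p :=
        sum_le_sum_of_subset_of_nonneg hsub fun _ _ _ => by positivity
    _ ≤ 4 * (1 + log b - log a) := sum_one_div_primes_two_pow_le ha han
    _ ≤ 4 * (1 + log (2 * log n / log y)) := by linarith

theorem prod_primesBetween_one_add_div_le_exp {k y : ℝ} {n : ℕ} (hk : 0 ≤ k) (hy : 4 ≤ y)
    (hyn : y < n) :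
    ∏ p ∈ primesBetween y n, (1 + k / ((p : ℝ) - 1)) ≤
      exp (8 * k * (1 + log (2 * log n / log y))) := by
  set P := primesBetween y n
  have hP : ∀ p ∈ P, (2 : ℝ) ≤ p := fun p hp => by
    exact_mod_cast (mem_primesBetween.1 hp).2.1.two_le
  have hterm : ∀ p ∈ P, k / ((p : ℝ) - 1) ≤ 2 * k * (1 / p) := fun p hp => by
    have := hP p hp
    rw [div_le_iff₀ (by linarith)]
    field_simp
    nlinarith
  calc ∏ p ∈ P, (1 + k / ((p : ℝ) - 1)) ≤ ∏ p ∈ P, exp (k / ((p : ℝ) - 1)) :=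
        prod_le_prod (fun p hp => add_nonneg zero_le_one (div_nonneg hk (by linarith [hP p hp])))
          fun p _ => by linarith [add_one_le_exp (k / ((p : ℝ) - 1))]
    _ = exp (∑ p ∈ P, k / ((p : ℝ) - 1)) := (exp_sum _ _).symm
    _ ≤ exp (8 * k * (1 + log (2 * log n / log y))) := by
        gcongr
        calc ∑ p ∈ P, k / ((p : ℝ) - 1) ≤ ∑ p ∈ P, 2 * k * (1 / p) := sum_le_sum hterm
          _ = 2 * k * ∑ p ∈ P, (1 : ℝ) / p := (mul_sum _ _ _).symm
          _ ≤ 2 * k * (4 * (1 + log (2 * log n / log y))) := by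
              gcongr
              exact sum_one_div_primesBetween_le hy hyn
          _ = 8 * k * (1 + log (2 * log n / log y)) := by ring

lemma eventually_mul_log_pow_mul_log_le {A : ℝ} (hA : 0 ≤ A) {B : ℝ} (hB : 0 < B) :
    ∀ᶠ x : ℝ in Filter.atTop, A * log x ^ 3 * (1 + log (B * x)) ≤ x := by
  filter_upwards [isLittleO_pow_log_id_atTop.bound (show (0 : ℝ) < 1 / (2 * A + 1) by positivity),
    tendsto_log_atTop.eventually_ge_atTop |1 + log B|, Filter.eventually_gt_atTop 0]
    with x hbound hlog hx
  rw [norm_of_nonneg (by positivity : 0 ≤ log x ^ 4), id, norm_of_nonneg hx.le] at hbound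
  have hlog0 : 0 ≤ log x := (abs_nonneg _).trans hlog
  rw [log_mul hB.ne' hx.ne']
  calc A * log x ^ 3 * (1 + (log B + log x)) ≤ A * log x ^ 3 * (2 * log x) := by
        gcongr
        linarith [le_abs_self (1 + log B)]
    _ ≤ (2 * A + 1) * log x ^ 4 := by nlinarith [pow_nonneg hlog0 4]
    _ ≤ x := by rwa [one_div_mul_eq_div, le_div_iff₀' (by positivity)] at hbound

lemma eventually_iterated_log_bounds {c : ℝ} (hc : 0 < c) :
    ∀ᶠ N : ℕ in Filter.atTop, 0 < log N ∧ c < log (log N) ∧ 3 * log (log N) ≤ c * log N ∧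
      1 < log (log (log N)) ∧
      8 * log (log (log N)) ^ 3 * (1 + log (2 / c * log (log N))) ≤ log (log N) := by
  have hL1 := tendsto_log_atTop.comp (tendsto_natCast_atTop_atTop (R := ℝ))
  have hL2 := tendsto_log_atTop.comp hL1
  have hL3 := tendsto_log_atTop.comp hL2
  have hlog_le : ∀ᶠ x : ℝ in Filter.atTop, 3 * log x ≤ c * x := by
    filter_upwards [isLittleO_log_id_atTop.bound (show 0 < c / 3 by positivity),
      Filter.eventually_ge_atTop 0] with x hx hx0
    rw [id, norm_of_nonneg hx0, norm_eq_abs] at hx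
    linarith [le_abs_self (log x)]
  exact (hL1.eventually_gt_atTop 0).and <| (hL2.eventually_gt_atTop c).and <|
    (hL1.eventually hlog_le).and <| (hL3.eventually_gt_atTop 1).and <|
    hL2.eventually (eventually_mul_log_pow_mul_log_le (by norm_num) (by positivity))

theorem rpow_neg_mul_prod_le_one_div_log_sq {c : ℝ} (hc : 0 < c) {N : ℕ} (hL1 : 0 < log N)
    (hL2 : c < log (log N)) (hy : 3 * log (log N) ≤ c * log N) (hL3 : 1 < log (log (log N)))
    (hsmall : 8 * log (log (log N)) ^ 3 * (1 + log (2 / c * log (log N))) ≤ log (log N)) :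
    (log (log (log N)) ^ 3) ^ (-(log (log N) / log (log (log (log N))))) *
        ∏ p ∈ primesBetween (exp (c * log N / log (log N))) N,
          (1 + log (log (log N)) ^ 3 / ((p : ℝ) - 1)) ≤ 1 / log N ^ 2 := by
  set L1 := log N
  set L2 := log L1
  set L3 := log L2
  have hL2pos : 0 < L2 := by linarith
  have hy4 : 4 ≤ exp (c * L1 / L2) := by
    have : 3 ≤ c * L1 / L2 := by rwa [le_div_iff₀ hL2pos]
    linarith [add_one_le_exp (c * L1 / L2)]
  have hyN : exp (c * L1 / L2) < N := by
    have hN : (0 : ℝ) < N := by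
      rcases N.eq_zero_or_pos with rfl | hN
      · simp [L1] at hL1
      · exact_mod_cast hN
    rw [← exp_log hN, exp_lt_exp, div_lt_iff₀ hL2pos]
    nlinarith
  have hlogy : 2 * L1 / log (exp (c * L1 / L2)) = 2 / c * L2 := by
    rw [log_exp]
    field_simp
  have hrpow : (L3 ^ 3) ^ (-(L2 / log L3)) = exp (-(3 * L2)) := by
    rw [rpow_def_of_pos (by positivity), log_pow]
    congr 1
    have : log L3 ≠ 0 := (log_pos hL3).ne'
    push_cast
    field_simp
  have hprod := prod_primesBetween_one_add_div_le_exp (k := L3 ^ 3) (by positivity) hy4 hyN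
  rw [hlogy] at hprod
  calc (L3 ^ 3) ^ (-(L2 / log L3)) *
        ∏ p ∈ primesBetween (exp (c * L1 / L2)) N, (1 + L3 ^ 3 / ((p : ℝ) - 1))
      ≤ exp (-(3 * L2)) * exp L2 := by
        rw [hrpow]
        gcongr
        exact hprod.trans (exp_le_exp.2 (by linarith))
    _ = 1 / L1 ^ 2 := by
        rw [← exp_add, show -(3 * L2) + L2 = -(L2 + L2) by ring, exp_neg, exp_add, exp_log hL1]
        ring

theorem stmt_14_general (θ : ℝ) (hθ4 : θ < 1 / 4) :
    ∃ C > (0 : ℝ), ∃ N₀ : ℕ, ∀ N : ℕ, N₀ ≤ N →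
      (∑' d : {d : ℕ // 0 < d ∧
            (∀ p : ℕ, p.Prime → p ∣ d →
              Real.exp ((1 / 8 - θ / 2) * Real.log N / Real.log (Real.log N)) < (p : ℝ)
                ∧ p < N) ∧
            Real.log (Real.log N) / Real.log (Real.log (Real.log (Real.log N))) ≤
              ((d : ℕ).primeFactors.card : ℝ)},
          (1 : ℝ) / (d : ℕ)) ≤
        ((Real.log (Real.log (Real.log N))) ^ (3 : ℕ)) ^
            (-(Real.log (Real.log N) / Real.log (Real.log (Real.log (Real.log N))))) *
          ∏ p ∈ (Finset.range N).filter (fun p : ℕ => p.Prime ∧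
              Real.exp ((1 / 8 - θ / 2) * Real.log N / Real.log (Real.log N)) < (p : ℝ)),
            (1 + (Real.log (Real.log (Real.log N))) ^ (3 : ℕ) / ((p : ℝ) - 1)) ∧
      ((Real.log (Real.log (Real.log N))) ^ (3 : ℕ)) ^
            (-(Real.log (Real.log N) / Real.log (Real.log (Real.log (Real.log N))))) *
          (∏ p ∈ (Finset.range N).filter (fun p : ℕ => p.Prime ∧
              Real.exp ((1 / 8 - θ / 2) * Real.log N / Real.log (Real.log N)) < (p : ℝ)),
            (1 + (Real.log (Real.log (Real.log N))) ^ (3 : ℕ) / ((p : ℝ) - 1))) ≤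
        C / (Real.log N) ^ (2 : ℕ) := by
  obtain ⟨N₀, hN₀⟩ := Filter.eventually_atTop.1
    (eventually_iterated_log_bounds (c := 1 / 8 - θ / 2) (by linarith))
  refine ⟨1, one_pos, N₀, fun N hN => ?_⟩
  obtain ⟨hL1, hL2, hy, hL3, hsmall⟩ := hN₀ N hN
  refine ⟨tsum_one_div_le_rpow_neg_mul_prod (one_le_pow₀ hL3.le)
    (fun p hp => (mem_primesBetween.1 hp).2.1) (fun d hd => ?_) fun d hd => hd.2.2,
    rpow_neg_mul_prod_le_one_div_log_sq (by linarith) hL1 hL2 hy hL3 hsmall⟩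
  exact Nat.mem_factoredNumbers'.2 fun p hp hpd =>
    mem_primesBetween.2 ⟨(hd.2.1 p hp hpd).2, hp, (hd.2.1 p hp hpd).1⟩

/-- With `y = exp((1/8 - θ/2) log N / log log N)`, `ω₀ = log log N / log log log log N`
and `k = (log log log N)³`, for large `N` the sum of `1/d` over `d` whose prime factors
lie in `(y, N)` and with `ω(d) ≥ ω₀` is at most
`k^{-ω₀} ∏_{y < p < N} (1 + k/(p-1)) ≪ 1/(log N)²`. -/
theorem stmt_14 (θ : ℝ) (hθ : 0 < θ) (hθ4 : θ < 1 / 4) :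
    ∃ C > (0 : ℝ), ∃ N₀ : ℕ, ∀ N : ℕ, N₀ ≤ N →
      (∑' d : {d : ℕ // 0 < d ∧
            (∀ p : ℕ, p.Prime → p ∣ d →
              Real.exp ((1 / 8 - θ / 2) * Real.log N / Real.log (Real.log N)) < (p : ℝ)
                ∧ p < N) ∧
            Real.log (Real.log N) / Real.log (Real.log (Real.log (Real.log N))) ≤
              ((d : ℕ).primeFactors.card : ℝ)},
          (1 : ℝ) / (d : ℕ)) ≤
        ((Real.log (Real.log (Real.log N))) ^ (3 : ℕ)) ^
            (-(Real.log (Real.log N) / Real.log (Real.log (Real.log (Real.log N))))) *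
          ∏ p ∈ (Finset.range N).filter (fun p : ℕ => p.Prime ∧
              Real.exp ((1 / 8 - θ / 2) * Real.log N / Real.log (Real.log N)) < (p : ℝ)),
            (1 + (Real.log (Real.log (Real.log N))) ^ (3 : ℕ) / ((p : ℝ) - 1)) ∧
      ((Real.log (Real.log (Real.log N))) ^ (3 : ℕ)) ^
            (-(Real.log (Real.log N) / Real.log (Real.log (Real.log (Real.log N))))) *
          (∏ p ∈ (Finset.range N).filter (fun p : ℕ => p.Prime ∧
              Real.exp ((1 / 8 - θ / 2) * Real.log N / Real.log (Real.log N)) < (p : ℝ)),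
            (1 + (Real.log (Real.log (Real.log N))) ^ (3 : ℕ) / ((p : ℝ) - 1))) ≤
        C / (Real.log N) ^ (2 : ℕ) :=
  stmt_14_general θ hθ4
end
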